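/- arXiv:2506.11214 — 10 statements merged into one kernel-verified Lean document; each statement's English description precedes it below -/
import Mathlib

section
/- For any α ∈ (1,2] and any vectors u, v ∈ ℝⁿ, it holds that ‖u+v‖^α ≤ ‖u‖^α + α‖u‖^{α-2} ⟪u, v⟫ + 2‖v‖^α (where the middle term is interpreted as 0 when u = 0). -/
set_option maxHeartbeats 1000000


open scoped RealInnerProductSpace

/-- Tangent-line bound for the concave function `x ↦ x ^ θ`, `0 < θ ≤ 1`. -/
lemma rpow_tangent_le {θ x c : ℝ} (hθ0 : 0 < θ) (hθ1 : θ ≤ 1) (hx : 0 ≤ x) (hc : 0 < c) :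
    x ^ θ ≤ c ^ θ + θ * c ^ (θ - 1) * (x - c) := by
  have hdiv : (0:ℝ) ≤ x / c := div_nonneg hx hc.le
  have h := rpow_one_add_le_one_add_mul_self (s := x / c - 1) (by linarith) hθ0.le hθ1
  rw [show (1:ℝ) + (x / c - 1) = x / c by ring, Real.div_rpow hx hc.le] at h
  have hcθ : 0 < c ^ θ := Real.rpow_pos_of_pos hc θ
  have h2 : x ^ θ ≤ c ^ θ * (1 + θ * (x / c - 1)) := by
    have := mul_le_mul_of_nonneg_left h hcθ.le
    calc x ^ θ = c ^ θ * (x ^ θ / c ^ θ) := by field_simp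
    _ ≤ _ := this
  have h3 : c ^ (θ - 1) = c ^ θ / c := by
    rw [Real.rpow_sub hc, Real.rpow_one]
  rw [h3]
  have hcne : c ≠ 0 := hc.ne'
  calc x ^ θ ≤ c ^ θ * (1 + θ * (x / c - 1)) := h2
  _ = c ^ θ + θ * (c ^ θ / c) * (x - c) := by field_simp

/-- Young-type inequality: `α * a^(α-1) * b ≤ (α-1) * a^α + b^α`. -/
lemma young_aux {α a b : ℝ} (hα : 1 < α) (ha : 0 ≤ a) (hb : 0 ≤ b) :
    α * a ^ (α - 1) * b ≤ (α - 1) * a ^ α + b ^ α := by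
  have hα0 : (0:ℝ) < α := by linarith
  have h := Real.geom_mean_le_arith_mean2_weighted
    (w₁ := (α - 1) / α) (w₂ := 1 / α) (p₁ := a ^ α) (p₂ := b ^ α)
    (div_nonneg (by linarith) hα0.le) (by positivity)
    (Real.rpow_nonneg ha α) (Real.rpow_nonneg hb α)
    (by field_simp; ring)
  have e1 : (a ^ α) ^ ((α - 1) / α) = a ^ (α - 1) := by
    rw [← Real.rpow_mul ha]; congr 1; field_simp
  have e2 : (b ^ α) ^ ((1:ℝ) / α) = b := by
    rw [← Real.rpow_mul hb, show α * ((1:ℝ) / α) = 1 by field_simp, Real.rpow_one]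
  rw [e1, e2] at h
  have h' := mul_le_mul_of_nonneg_left h hα0.le
  calc α * a ^ (α - 1) * b = α * (a ^ (α - 1) * b) := by ring
  _ ≤ α * ((α - 1) / α * a ^ α + 1 / α * b ^ α) := h'
  _ = (α - 1) * a ^ α + b ^ α := by field_simp

theorem norm_add_rpow_le {n : ℕ} (α : ℝ) (hα : α ∈ Set.Ioc (1:ℝ) 2)
    (u v : EuclideanSpace ℝ (Fin n)) :
    ‖u + v‖ ^ α ≤ ‖u‖ ^ α + α * ‖u‖ ^ (α - 2) * ⟪u, v⟫ + 2 * ‖v‖ ^ α := by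
  obtain ⟨hα1, hα2⟩ := hα
  have hα0 : (0:ℝ) < α := by linarith
  by_cases hv : v = 0
  · subst hv
    simp [Real.zero_rpow hα0.ne']
  by_cases hu : u = 0
  · subst hu
    simp only [zero_add, inner_zero_left, mul_zero, norm_zero,
      Real.zero_rpow hα0.ne', add_zero, zero_add]
    have : (0:ℝ) ≤ ‖v‖ ^ α := Real.rpow_nonneg (norm_nonneg v) α
    linarith
  set a := ‖u‖ with ha_def
  set b := ‖v‖ with hb_def
  set s := (⟪u, v⟫ : ℝ) with hs_def
  have ha0 : 0 < a := norm_pos_iff.mpr hu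
  have hb0 : 0 < b := norm_pos_iff.mpr hv
  have ha : (0:ℝ) ≤ a := ha0.le
  have hb : (0:ℝ) ≤ b := hb0.le
  have hN : ‖u + v‖ ^ 2 = a ^ 2 + 2 * s + b ^ 2 := norm_add_sq_real u v
  have habs : |s| ≤ a * b := abs_real_inner_le_norm u v
  have hmulα : ((2:ℕ):ℝ) * (α / 2) = α := by push_cast; ring
  have hmulα2 : ((2:ℕ):ℝ) * (α / 2 - 1) = α - 2 := by push_cast; ring
  have key : ∀ c : ℝ, 0 < c →
      ‖u + v‖ ^ α ≤ c ^ α + α / 2 * c ^ (α - 2) * (a ^ 2 + 2 * s + b ^ 2 - c ^ 2) := by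
    intro c hc
    have hNα : ‖u + v‖ ^ α = (‖u + v‖ ^ 2) ^ (α / 2) := by
      rw [← Real.rpow_natCast_mul (norm_nonneg _) 2 (α / 2), hmulα]
    have e1 : (c ^ 2) ^ (α / 2) = c ^ α := by
      rw [← Real.rpow_natCast_mul hc.le, hmulα]
    have e2 : (c ^ 2) ^ (α / 2 - 1) = c ^ (α - 2) := by
      rw [← Real.rpow_natCast_mul hc.le, hmulα2]
    have h := rpow_tangent_le (θ := α / 2) (x := ‖u + v‖ ^ 2) (c := c ^ 2)
      (by linarith) (by linarith) (sq_nonneg _) (by positivity)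
    rw [e1, e2, hN] at h
    rw [hNα, hN]
    exact h
  have hA : 0 < a ^ (α - 2) := Real.rpow_pos_of_pos ha0 _
  have hB : 0 < b ^ (α - 2) := Real.rpow_pos_of_pos hb0 _
  have haα : a ^ α = a ^ (α - 2) * a ^ 2 := by
    rw [← Real.rpow_natCast a 2, ← Real.rpow_add ha0]; norm_num
  have hbα : b ^ α = b ^ (α - 2) * b ^ 2 := by
    rw [← Real.rpow_natCast b 2, ← Real.rpow_add hb0]; norm_num
  rcases le_or_gt b (2 * a) with hcase | hcase
  · -- tangent at a²
    have h := key a ha0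
    have hmono : a ^ (α - 2) ≤ (b / 2) ^ (α - 2) :=
      Real.rpow_le_rpow_of_nonpos (by linarith) (by linarith) (by linarith)
    have hb2 : (b / 2) ^ (α - 2) = 2 ^ (2 - α) * b ^ (α - 2) := by
      rw [Real.div_rpow hb (by norm_num), show (2:ℝ) - α = -(α - 2) by ring,
        Real.rpow_neg (by norm_num)]
      field_simp
    have hT0 : (0:ℝ) ≤ 2 ^ (2 - α) := Real.rpow_nonneg (by norm_num) _
    have h2le : (2:ℝ) ^ (2 - α) ≤ 2 := by
      calc (2:ℝ) ^ (2 - α) ≤ 2 ^ (1:ℝ) :=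
        Real.rpow_le_rpow_of_exponent_le (by norm_num) (by linarith)
      _ = 2 := Real.rpow_one 2
    have hprod : α / 2 * 2 ^ (2 - α) ≤ 2 := by nlinarith
    have hbound : α / 2 * a ^ (α - 2) * b ^ 2 ≤ 2 * b ^ α := by
      have h1 : α / 2 * a ^ (α - 2) * b ^ 2 ≤ α / 2 * (2 ^ (2 - α) * b ^ (α - 2)) * b ^ 2 := by
        rw [← hb2]
        gcongr
      have h2 : α / 2 * (2 ^ (2 - α) * b ^ (α - 2)) * b ^ 2 ≤ 2 * (b ^ (α - 2) * b ^ 2) := by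
        nlinarith [mul_le_mul_of_nonneg_right hprod (mul_nonneg hB.le (sq_nonneg b))]
      rw [hbα]; linarith
    linarith [h, hbound]
  · -- tangent at b²
    have h := key b hb0
    have hmono : b ^ (α - 2) ≤ a ^ (α - 2) :=
      Real.rpow_le_rpow_of_nonpos ha0 (by linarith) (by linarith)
    have hs_lb : -(a * b) ≤ s := neg_le_of_abs_le habs
    have haα1 : a ^ (α - 1) = a ^ (α - 2) * a := by
      have h' := Real.rpow_add ha0 (α - 2) 1
      rw [Real.rpow_one] at h'
      rw [show α - 1 = α - 2 + 1 by ring, h']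
    have hyoung : α * (a ^ (α - 2) * a) * b
        ≤ (α - 1) * (a ^ (α - 2) * a ^ 2) + b ^ (α - 2) * b ^ 2 := by
      have hy := young_aux hα1 ha hb
      rw [haα1, haα, hbα] at hy
      linarith
    have hsc : α * s * (b ^ (α - 2) - a ^ (α - 2))
        ≤ α * (a * b) * (a ^ (α - 2) - b ^ (α - 2)) := by
      have hd : 0 ≤ a ^ (α - 2) - b ^ (α - 2) := by linarith
      nlinarith [mul_nonneg (show (0:ℝ) ≤ s + a * b by linarith)
        (mul_nonneg hα0.le hd)]
    have hsmall : α / 2 * b ^ (α - 2) * a ^ 2 ≤ α * a * (b ^ (α - 2) * b) := by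
      have h2b : a ≤ 2 * b := by linarith
      nlinarith [mul_le_mul_of_nonneg_left h2b
        (show (0:ℝ) ≤ α / 2 * b ^ (α - 2) * a by positivity)]
    linarith [h, hsc, hyoung, hsmall, haα, hbα,
      mul_nonneg (show (0:ℝ) ≤ 2 - α by linarith) (mul_nonneg hA.le (sq_nonneg a))]
end

section
/- For any α ∈ (1,2], any vectors u, v ∈ ℝⁿ, and any c > 0, it holds that ‖u+v‖^α ≤ (1+c)‖u‖^α + (2 + (α-1)^{α-1} c^{1-α})‖v‖^α. -/
open Real Set NNReal

private lemma rpow_subadd {p x y : ℝ} (hp : 0 ≤ p) (hp1 : p ≤ 1) (hx : 0 ≤ x) (hy : 0 ≤ y) :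
    (x + y) ^ p ≤ x ^ p + y ^ p := by
  have h := NNReal.coe_le_coe.2 (NNReal.rpow_add_le_add_rpow x.toNNReal y.toNNReal hp hp1)
  rw [NNReal.coe_add, NNReal.coe_rpow, NNReal.coe_rpow, NNReal.coe_rpow, NNReal.coe_add,
    Real.coe_toNNReal x hx, Real.coe_toNNReal y hy] at h
  exact h

private lemma mvt_step {α a b : ℝ} (hα1 : 1 ≤ α) (ha : 0 ≤ a) (hb : 0 < b) :
    (a + b) ^ α ≤ a ^ α + α * (a + b) ^ (α - 1) * b := by
  have hdiff : ∀ x : ℝ, HasDerivAt (fun x : ℝ => x ^ α) (α * x ^ (α - 1)) x := fun x =>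
    Real.hasDerivAt_rpow_const (Or.inr hα1)
  have hab : a < a + b := by linarith
  obtain ⟨ξ, hξ, heq⟩ := exists_deriv_eq_slope (fun x : ℝ => x ^ α) hab
    (fun x _ => ((hdiff x).continuousAt).continuousWithinAt)
    (fun x _ => ((hdiff x).differentiableAt).differentiableWithinAt)
  rw [(hdiff ξ).deriv] at heq
  have hba : a + b - a = b := by ring
  rw [hba] at heq
  have hξ0 : 0 ≤ ξ := le_trans ha (le_of_lt hξ.1)
  have hξle : ξ ^ (α - 1) ≤ (a + b) ^ (α - 1) :=
    Real.rpow_le_rpow hξ0 (le_of_lt hξ.2) (by linarith)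
  have hα0 : (0:ℝ) ≤ α := by linarith
  have hle : ((a + b) ^ α - a ^ α) / b ≤ α * (a + b) ^ (α - 1) := by
    rw [← heq]; exact mul_le_mul_of_nonneg_left hξle hα0
  have := (div_le_iff₀ hb).mp hle
  linarith

private lemma young_step {α a b c : ℝ} (hα1 : 1 < α) (ha : 0 ≤ a) (hb : 0 ≤ b) (hc : 0 < c) :
    α * a ^ (α - 1) * b ≤ c * a ^ α + (α - 1) ^ (α - 1) * c ^ (1 - α) * b ^ α := by
  have hα1' : (0:ℝ) < α - 1 := by linarith
  have hα0 : (0:ℝ) < α := by linarith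
  have hαne : α ≠ 0 := hα0.ne'
  have hα1ne : α - 1 ≠ 0 := hα1'.ne'
  set t : ℝ := (c / (α - 1)) ^ ((α - 1) / α) with ht
  have hct : 0 < c / (α - 1) := div_pos hc hα1'
  have ht0 : 0 < t := Real.rpow_pos_of_pos hct _
  have hpq : (α / (α - 1)).HolderConjugate α := by
    rw [Real.holderConjugate_iff]
    constructor
    · rw [lt_div_iff₀ hα1']; linarith
    · field_simp; ring
  have hY := Real.young_inequality_of_nonneg (a := t * a ^ (α - 1)) (b := b / t)
    (mul_nonneg ht0.le (Real.rpow_nonneg ha _)) (div_nonneg hb ht0.le) hpq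
  have h1 : t * a ^ (α - 1) * (b / t) = a ^ (α - 1) * b := by
    field_simp
  have h2 : (t * a ^ (α - 1)) ^ (α / (α - 1)) = (c / (α - 1)) * a ^ α := by
    rw [Real.mul_rpow ht0.le (Real.rpow_nonneg ha _), ht, ← Real.rpow_mul hct.le,
      ← Real.rpow_mul ha]
    have e1 : (α - 1) / α * (α / (α - 1)) = 1 := by field_simp
    have e2 : (α - 1) * (α / (α - 1)) = α := by field_simp
    rw [e1, e2, Real.rpow_one]
  have h3 : (b / t) ^ α = (α - 1) ^ (α - 1) * c ^ (1 - α) * b ^ α := by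
    rw [Real.div_rpow hb ht0.le, ht, ← Real.rpow_mul hct.le]
    have e3 : (α - 1) / α * α = α - 1 := by field_simp
    rw [e3, Real.div_rpow hc.le hα1'.le, div_div_eq_mul_div]
    have e4 : c ^ (1 - α) = (c ^ (α - 1))⁻¹ := by
      rw [← Real.rpow_neg hc.le]; ring_nf
    have hcne : c ^ (α - 1) ≠ 0 := (Real.rpow_pos_of_pos hc _).ne'
    rw [e4]; field_simp
  rw [h1, h2, h3] at hY
  calc α * a ^ (α - 1) * b = α * (a ^ (α - 1) * b) := by ring
    _ ≤ α * ((c / (α - 1)) * a ^ α / (α / (α - 1)) +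
        (α - 1) ^ (α - 1) * c ^ (1 - α) * b ^ α / α) := mul_le_mul_of_nonneg_left hY hα0.le
    _ = c * a ^ α + (α - 1) ^ (α - 1) * c ^ (1 - α) * b ^ α := by field_simp

private lemma key_ineq {α a b c : ℝ} (hα1 : 1 < α) (hα2 : α ≤ 2) (ha : 0 ≤ a) (hb : 0 ≤ b)
    (hc : 0 < c) :
    (a + b) ^ α ≤ (1 + c) * a ^ α + (2 + (α - 1) ^ (α - 1) * c ^ (1 - α)) * b ^ α := by
  have hα0 : (0:ℝ) < α := by linarith
  have hK : 0 ≤ (α - 1) ^ (α - 1) * c ^ (1 - α) :=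
    mul_nonneg (Real.rpow_nonneg (by linarith) _) (Real.rpow_nonneg hc.le _)
  rcases eq_or_lt_of_le hb with hb0 | hb0
  · rw [← hb0, add_zero, Real.zero_rpow hα0.ne', mul_zero, add_zero]
    nlinarith [Real.rpow_nonneg ha α]
  · have h1 := mvt_step hα1.le ha hb0
    have h2 : (a + b) ^ (α - 1) ≤ a ^ (α - 1) + b ^ (α - 1) :=
      rpow_subadd (by linarith) (by linarith) ha hb
    have h3 : b ^ (α - 1) * b = b ^ α := by
      rw [← Real.rpow_add_one (ne_of_gt hb0)]; ring_nf
    have h4 := young_step hα1 ha hb hc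
    have h5 : α * (a + b) ^ (α - 1) * b ≤ α * a ^ (α - 1) * b + α * b ^ α := by
      calc α * (a + b) ^ (α - 1) * b = α * ((a + b) ^ (α - 1) * b) := by ring
        _ ≤ α * ((a ^ (α - 1) + b ^ (α - 1)) * b) :=
            mul_le_mul_of_nonneg_left (mul_le_mul_of_nonneg_right h2 hb0.le) hα0.le
        _ = α * a ^ (α - 1) * b + α * (b ^ (α - 1) * b) := by ring
        _ = α * a ^ (α - 1) * b + α * b ^ α := by rw [h3]
    have h6 : α * b ^ α ≤ 2 * b ^ α :=
      mul_le_mul_of_nonneg_right hα2 (Real.rpow_nonneg hb α)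
    linarith

theorem norm_add_rpow_le_weighted {n : ℕ} (α : ℝ) (hα : α ∈ Set.Ioc (1:ℝ) 2)
    (u v : EuclideanSpace ℝ (Fin n)) (c : ℝ) (hc : 0 < c) :
    ‖u + v‖ ^ α ≤ (1 + c) * ‖u‖ ^ α + (2 + (α - 1) ^ (α - 1) * c ^ (1 - α)) * ‖v‖ ^ α := by
  obtain ⟨hα1, hα2⟩ := hα
  have h0 : ‖u + v‖ ^ α ≤ (‖u‖ + ‖v‖) ^ α :=
    Real.rpow_le_rpow (norm_nonneg _) (norm_add_le u v) (by linarith)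
  exact h0.trans (key_ineq hα1 hα2 (norm_nonneg u) (norm_nonneg v) hc)
end

section
/- Suppose f : ℝⁿ → ℝ is differentiable with L₁-Lipschitz gradient. Let x, m ∈ ℝⁿ with m ≠ 0, η > 0, and x⁺ = x - η m/‖m‖. Then f(x⁺) ≤ f(x) - η‖∇f(x)‖ + 2η‖∇f(x) - m‖ + (L₁/2)η². -/
open InnerProductSpace

theorem normalized_descent {n : ℕ} (f : EuclideanSpace ℝ (Fin n) → ℝ) (L₁ : ℝ)
    (hf : Differentiable ℝ f)
    (hL : ∀ x y, ‖gradient f x - gradient f y‖ ≤ L₁ * ‖x - y‖)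
    (x m : EuclideanSpace ℝ (Fin n)) (hm : m ≠ 0) (η : ℝ) (hη : 0 < η) :
    f (x - (η / ‖m‖) • m) ≤
      f x - η * ‖gradient f x‖ + 2 * η * ‖gradient f x - m‖ + L₁ / 2 * η ^ 2 := by
  have hmn : (0:ℝ) < ‖m‖ := norm_pos_iff.mpr hm
  have hL₁ : 0 ≤ L₁ := by
    have h := hL x (x + m)
    have : 0 ≤ L₁ * ‖m‖ := le_trans (norm_nonneg _) (by simpa using h)
    nlinarith
  set v : EuclideanSpace ℝ (Fin n) := -((η / ‖m‖) • m) with hv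
  have hvnorm : ‖v‖ = η := by
    rw [hv, norm_neg, norm_smul, Real.norm_eq_abs, abs_of_pos (div_pos hη hmn)]
    field_simp
  set g₀ := gradient f x with hg₀
  -- derivative of t ↦ f (x + t • v)
  have key : ∀ t : ℝ, HasDerivAt (fun t : ℝ => f (x + t • v)) ⟪gradient f (x + t • v), v⟫_ℝ t := by
    intro t
    have hc : HasDerivAt (fun t : ℝ => x + t • v) v t := by
      simpa using ((hasDerivAt_id t).smul_const v).const_add x
    have hF := ((hf (x + t • v)).hasGradientAt).hasFDerivAt
    have := hF.comp_hasDerivAt t hc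
    exact this
  set G : ℝ → ℝ := fun t => f (x + t • v) - t * ⟪g₀, v⟫_ℝ - L₁ / 2 * t ^ 2 * ‖v‖ ^ 2 with hG
  have hG' : ∀ t : ℝ, HasDerivAt G
      (⟪gradient f (x + t • v), v⟫_ℝ - ⟪g₀, v⟫_ℝ - L₁ / 2 * (2 * t) * ‖v‖ ^ 2) t := by
    intro t
    have h1 := key t
    have h2 : HasDerivAt (fun t : ℝ => t * ⟪g₀, v⟫_ℝ) ⟪g₀, v⟫_ℝ t := by
      simpa using (hasDerivAt_id t).mul_const ⟪g₀, v⟫_ℝ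
    have h3 : HasDerivAt (fun t : ℝ => L₁ / 2 * t ^ 2 * ‖v‖ ^ 2) (L₁ / 2 * (2 * t) * ‖v‖ ^ 2) t := by
      have := (hasDerivAt_pow 2 t).const_mul (L₁ / 2)
      simpa [mul_comm, mul_assoc, mul_left_comm] using this.mul_const (‖v‖ ^ 2)
    exact (h1.sub h2).sub h3
  have hanti : AntitoneOn G (Set.Icc 0 1) := by
    apply antitoneOn_of_deriv_nonpos (convex_Icc 0 1)
    · exact fun t _ => ((hG' t).differentiableAt).continuousAt.continuousWithinAt
    · intro t _
      exact ((hG' t).differentiableAt).differentiableWithinAt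
    · intro t ht
      rw [interior_Icc] at ht
      rw [(hG' t).deriv]
      have hip : ⟪gradient f (x + t • v) - g₀, v⟫_ℝ ≤ L₁ * t * ‖v‖ ^ 2 := by
        calc ⟪gradient f (x + t • v) - g₀, v⟫_ℝ
            ≤ ‖gradient f (x + t • v) - g₀‖ * ‖v‖ := real_inner_le_norm _ _
          _ ≤ (L₁ * ‖(x + t • v) - x‖) * ‖v‖ := by
              apply mul_le_mul_of_nonneg_right (hL _ _) (norm_nonneg _)
          _ = L₁ * t * ‖v‖ ^ 2 := by
              rw [add_sub_cancel_left, norm_smul, Real.norm_eq_abs, abs_of_pos ht.1]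
              ring
      have : ⟪gradient f (x + t • v), v⟫_ℝ - ⟪g₀, v⟫_ℝ = ⟪gradient f (x + t • v) - g₀, v⟫_ℝ := by
        rw [inner_sub_left]
      rw [this]
      nlinarith [hip]
  have h10 : G 1 ≤ G 0 := hanti (by norm_num) (by norm_num) (by norm_num)
  have hdescent : f (x + v) ≤ f x + ⟪g₀, v⟫_ℝ + L₁ / 2 * η ^ 2 := by
    have : f (x + v) - ⟪g₀, v⟫_ℝ - L₁ / 2 * ‖v‖ ^ 2 ≤ f x := by
      simpa [hG] using h10
    rw [hvnorm] at this; linarith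
  have hinner : ⟪g₀, v⟫_ℝ ≤ -η * ‖g₀‖ + 2 * η * ‖g₀ - m‖ := by
    have h1 : (‖g₀‖ - 2 * ‖g₀ - m‖) * ‖m‖ ≤ ⟪g₀, m⟫_ℝ := by
      have hcs : -(‖g₀ - m‖ * ‖m‖) ≤ ⟪g₀ - m, m⟫_ℝ := by
        have := real_inner_le_norm (g₀ - m) m
        have := abs_real_inner_le_norm (g₀ - m) m
        nlinarith [neg_abs_le ⟪g₀ - m, m⟫_ℝ]
      have hnm : ‖g₀‖ - ‖g₀ - m‖ ≤ ‖m‖ := by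
        have := norm_sub_norm_le g₀ m
        have h2 := norm_sub_rev g₀ m
        linarith [norm_sub_norm_le g₀ m]
      have hexp : ⟪g₀, m⟫_ℝ = ⟪g₀ - m, m⟫_ℝ + ‖m‖ ^ 2 := by
        rw [inner_sub_left, real_inner_self_eq_norm_sq]; ring
      nlinarith [norm_nonneg (g₀ - m), norm_nonneg m]
    have : ⟪g₀, v⟫_ℝ = -(η / ‖m‖) * ⟪g₀, m⟫_ℝ := by
      rw [hv, inner_neg_right, inner_smul_right]; ring
    rw [this]
    have h2 : (η / ‖m‖) * ((‖g₀‖ - 2 * ‖g₀ - m‖) * ‖m‖) ≤ (η / ‖m‖) * ⟪g₀, m⟫_ℝ :=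
      mul_le_mul_of_nonneg_left h1 (le_of_lt (div_pos hη hmn))
    have h3 : (η / ‖m‖) * ((‖g₀‖ - 2 * ‖g₀ - m‖) * ‖m‖) = η * ‖g₀‖ - 2 * η * ‖g₀ - m‖ := by
      field_simp
    linarith [h2, h3 ▸ h2]
  have hxv : x - (η / ‖m‖) • m = x + v := by rw [hv]; abel
  rw [hxv]
  calc f (x + v) ≤ f x + ⟪g₀, v⟫_ℝ + L₁ / 2 * η ^ 2 := hdescent
    _ ≤ f x + (-η * ‖g₀‖ + 2 * η * ‖g₀ - m‖) + L₁ / 2 * η ^ 2 := by linarith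
    _ = f x - η * ‖g₀‖ + 2 * η * ‖g₀ - m‖ + L₁ / 2 * η ^ 2 := by ring
end

section
/- For any positive integer t, the infinite product ∏_{s ≥ 1, s ≠ t} (1 - t²/s²) converges and equals (-1)^{t-1}/2. -/
open Finset Filter Nat

lemma fact_ratio (a : ℕ) : ∀ k : ℕ, ((a + k)! : ℝ) = (a ! : ℝ) * ∏ j ∈ range k, ((a : ℝ) + 1 + j) := by
  intro k
  induction k with
  | zero => simp
  | succ k ih =>
      rw [prod_range_succ, ← mul_assoc, ← ih, show a + (k+1) = (a+k)+1 from by ring,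
        Nat.factorial_succ]
      push_cast
      ring

lemma tendsto_h (t : ℕ) :
    Tendsto (fun N : ℕ => ((N - t)! : ℝ) * ((N + t)! : ℝ) / ((N ! : ℝ)) ^ 2) atTop (nhds 1) := by
  rw [← tendsto_add_atTop_iff_nat t]
  have key : ∀ m : ℕ, ((m + t - t)! : ℝ) * ((m + t + t)! : ℝ) / (((m + t)! : ℝ)) ^ 2
      = ∏ j ∈ range t, (((m : ℝ) + t + 1 + j) / ((m : ℝ) + 1 + j)) := by
    intro m
    have h2 := fact_ratio (m + t) t
    have h1 := fact_ratio m t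
    push_cast at h2
    rw [Nat.add_sub_cancel, prod_div_distrib, show m + t + t = (m + t) + t from rfl, h2, h1]
    have hm : (m ! : ℝ) ≠ 0 := Nat.cast_ne_zero.mpr (Nat.factorial_ne_zero m)
    have hp : (∏ j ∈ range t, ((m : ℝ) + 1 + j)) ≠ 0 := by
      apply prod_ne_zero_iff.mpr; intro j _; positivity
    field_simp
  rw [show (1 : ℝ) = ∏ j ∈ range t, (1 : ℝ) from by simp]
  refine Tendsto.congr (fun m => (key m).symm) (tendsto_finset_prod _ fun j _ => ?_)
  have hb : Tendsto (fun m : ℕ => (m : ℝ) + 1 + j) atTop atTop :=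
    tendsto_atTop_add_const_right _ _ (tendsto_atTop_add_const_right _ _ tendsto_natCast_atTop_atTop)
  have h0 : Tendsto (fun m : ℕ => ((t : ℝ)) / ((m : ℝ) + 1 + j)) atTop (nhds 0) :=
    Tendsto.div_atTop tendsto_const_nhds hb
  have h1 := h0.const_add (1 : ℝ)
  rw [add_zero] at h1
  refine h1.congr (fun m => ?_)
  have hne : (m : ℝ) + 1 + j ≠ 0 := by positivity
  field_simp
  ring

lemma prod_sub (t : ℕ) : ∀ n : ℕ, n < t →
    ∏ s ∈ Icc 1 n, ((s : ℝ) - t) = (-1) ^ n * ((t - 1)! : ℝ) / ((t - 1 - n)! : ℝ) := by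
  intro n
  induction n with
  | zero =>
      intro _
      simp [div_self (Nat.cast_ne_zero.mpr (Nat.factorial_ne_zero (t-1)) : ((t-1)! : ℝ) ≠ 0)]
  | succ n ih =>
      intro hn
      rw [prod_Icc_succ_top (Nat.one_le_iff_ne_zero.mpr (Nat.succ_ne_zero n)),
        ih (by omega)]
      have h1 : t - 1 - n = (t - 1 - (n + 1)) + 1 := by omega
      have h2 : ((n : ℝ) + 1) - t = -((t - 1 - n : ℕ) : ℝ) := by
        have : (t - 1 - n : ℕ) = t - (n + 1) := by omega
        rw [this]
        have h3 : ((t - (n+1) : ℕ) : ℝ) = (t : ℝ) - (n + 1) := by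
          push_cast [Nat.cast_sub (by omega : n + 1 ≤ t)]; ring
        rw [h3]; ring
      rw [h1, Nat.factorial_succ]
      have hne1 : ((t - 1 - (n+1))! : ℝ) ≠ 0 := Nat.cast_ne_zero.mpr (Nat.factorial_ne_zero _)
      have hne2 : ((t - 1 - (n+1) : ℕ) : ℝ) + 1 ≠ 0 := by positivity
      push_cast [h2]
      push_cast at hne2 ⊢
      rw [show ((t - 1 - n : ℕ) : ℝ) = ((t - 1 - (n+1) : ℕ) : ℝ) + 1 from by rw [h1]; push_cast; ring]
      field_simp
      ring

lemma prod_add (t : ℕ) : ∀ n : ℕ,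
    ∏ s ∈ Icc 1 n, ((s : ℝ) + t) = ((n + t)! : ℝ) / (t ! : ℝ) := by
  intro n
  induction n with
  | zero =>
      simp [div_self (Nat.cast_ne_zero.mpr (Nat.factorial_ne_zero t) : (t ! : ℝ) ≠ 0)]
  | succ n ih =>
      rw [prod_Icc_succ_top (Nat.one_le_iff_ne_zero.mpr (Nat.succ_ne_zero n)), ih,
        show n + 1 + t = (n + t) + 1 from by ring, Nat.factorial_succ]
      have : (t ! : ℝ) ≠ 0 := Nat.cast_ne_zero.mpr (Nat.factorial_ne_zero _)
      push_cast
      field_simp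
      ring

lemma prod_id (n : ℕ) : ∏ s ∈ Icc 1 n, (s : ℝ) = (n ! : ℝ) := by
  rw [← Nat.cast_prod, ← Finset.Ico_add_one_right_eq_Icc, prod_Ico_id_eq_factorial]

lemma Pbase (t : ℕ) (ht : 1 ≤ t) :
    ∏ s ∈ (Finset.Icc 1 t).erase t, (1 - (t : ℝ) ^ 2 / (s : ℝ) ^ 2)
      = (-1) ^ (t - 1) * ((t - t)! : ℝ) * ((t + t)! : ℝ) / (2 * (t ! : ℝ) ^ 2) := by
  have hset : (Finset.Icc 1 t).erase t = Finset.Icc 1 (t - 1) := by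
    ext s; simp only [Finset.mem_erase, Finset.mem_Icc]; omega
  rw [hset]
  have hfac : ∀ s ∈ Finset.Icc 1 (t - 1),
      (1 - (t : ℝ) ^ 2 / (s : ℝ) ^ 2)
        = (((s : ℝ) - t) * ((s : ℝ) + t)) / ((s : ℝ) * (s : ℝ)) := by
    intro s hs
    simp only [Finset.mem_Icc] at hs
    have : (s : ℝ) ≠ 0 := Nat.cast_ne_zero.mpr (by omega)
    field_simp
    ring
  rw [prod_congr rfl hfac, prod_div_distrib, prod_mul_distrib, prod_mul_distrib,
    prod_sub t (t - 1) (by omega), prod_add t (t - 1), prod_id]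
  obtain ⟨k, rfl⟩ : ∃ k, t = k + 1 := ⟨t - 1, by omega⟩
  simp only [Nat.add_sub_cancel, Nat.sub_self]
  have e1 : k + 1 + (k + 1) = (2 * k + 1) + 1 := by ring
  have e2 : k + (k + 1) = 2 * k + 1 := by ring
  have g1 : (((2 * k + 1) + 1)! : ℝ) = ((2 * k : ℕ) + 2) * ((2 * k + 1)! : ℝ) := by
    rw [Nat.factorial_succ]; push_cast; ring
  have g2 : ((2 * k + 1)! : ℝ) = ((2 * k : ℕ) + 1) * ((2 * k)! : ℝ) := by
    rw [Nat.factorial_succ]; push_cast; ring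
  have g3 : ((k + 1)! : ℝ) = ((k : ℕ) + 1) * (k ! : ℝ) := by
    rw [Nat.factorial_succ]; push_cast; ring
  rw [e1, e2, show ((2 * k + 1) + 1 : ℕ) = 2 * k + 1 + 1 from rfl, g1, g2, g3]
  have h1 : ((2 * k)! : ℝ) ≠ 0 := Nat.cast_ne_zero.mpr (Nat.factorial_ne_zero _)
  have h2 : (k ! : ℝ) ≠ 0 := Nat.cast_ne_zero.mpr (Nat.factorial_ne_zero _)
  push_cast
  field_simp
  ring

lemma Pformula (t : ℕ) (ht : 1 ≤ t) : ∀ N, t ≤ N →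
    ∏ s ∈ (Finset.Icc 1 N).erase t, (1 - (t : ℝ) ^ 2 / (s : ℝ) ^ 2)
      = (-1) ^ (t - 1) * ((N - t)! : ℝ) * ((N + t)! : ℝ) / (2 * (N ! : ℝ) ^ 2) := by
  intro N hN
  induction N, hN using Nat.le_induction with
  | base => exact Pbase t ht
  | succ N hN ih =>
      have hset : (Finset.Icc 1 (N + 1)).erase t
          = insert (N + 1) ((Finset.Icc 1 N).erase t) := by
        ext s
        simp only [Finset.mem_erase, Finset.mem_Icc, Finset.mem_insert]
        omega
      have hnotmem : (N + 1) ∉ (Finset.Icc 1 N).erase t := by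
        simp only [Finset.mem_erase, Finset.mem_Icc]; omega
      rw [hset, prod_insert hnotmem, ih]
      have c1 : ((N + 1 - t : ℕ) : ℝ) = (N : ℝ) + 1 - t := by
        push_cast [Nat.cast_sub (by omega : t ≤ N + 1)]; ring
      have f1 : ((N + 1 - t)! : ℝ) = ((N - t)! : ℝ) * ((N : ℝ) + 1 - t) := by
        rw [show N + 1 - t = (N - t) + 1 from by omega, Nat.factorial_succ]
        push_cast [Nat.cast_sub (by omega : t ≤ N)]
        ring
      have f2 : ((N + 1 + t)! : ℝ) = ((N + t)! : ℝ) * ((N : ℝ) + 1 + t) := by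
        rw [show N + 1 + t = (N + t) + 1 from by ring, Nat.factorial_succ]
        push_cast; ring
      have f3 : ((N + 1)! : ℝ) = (N ! : ℝ) * ((N : ℝ) + 1) := by
        rw [Nat.factorial_succ]; push_cast; ring
      rw [f1, f2, f3]
      have h1 : (N ! : ℝ) ≠ 0 := Nat.cast_ne_zero.mpr (Nat.factorial_ne_zero _)
      have h2 : ((N : ℝ) + 1) ≠ 0 := by positivity
      field_simp
      push_cast
      ring

theorem infinite_product_eq (t : ℕ) (ht : 1 ≤ t) :
    Filter.Tendsto
      (fun N => ∏ s ∈ (Finset.Icc 1 N).erase t, (1 - (t : ℝ) ^ 2 / (s : ℝ) ^ 2))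
      Filter.atTop (nhds ((-1 : ℝ) ^ (t - 1) / 2)) := by
  have h := (tendsto_h t).const_mul ((-1 : ℝ) ^ (t - 1) / 2)
  rw [mul_one] at h
  refine h.congr' ?_
  filter_upwards [eventually_ge_atTop t] with N hN
  rw [Pformula t ht N hN]
  ring
end

section
/- Let q be a positive integer and γ ∈ (0, 1/2]. Define γ_t = γ/t² for 1 ≤ t ≤ q and θ_t = (∏_{s≠t, 1≤s≤q}(1 - s²/γ)) / ((t²/γ) ∏_{s≠t, 1≤s≤q}((t² - s²)/γ)). Then for every r with 1 ≤ r ≤ q, ∑_{t=1}^q θ_t / γ_t^r = 1. -/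
open Polynomial Finset

theorem vandermonde_solution (q : ℕ) (hq : 1 ≤ q) (γ : ℝ) (hγ : γ ∈ Set.Ioc (0:ℝ) (1/2))
    (θ : ℕ → ℝ)
    (hθ : ∀ t, θ t = (∏ s ∈ (Finset.Icc 1 q).erase t, (1 - (s : ℝ) ^ 2 / γ)) /
        (((t : ℝ) ^ 2 / γ) *
          ∏ s ∈ (Finset.Icc 1 q).erase t, (((t : ℝ) ^ 2 - (s : ℝ) ^ 2) / γ)))
    (r : ℕ) (hr1 : 1 ≤ r) (hrq : r ≤ q) :
    ∑ t ∈ Finset.Icc 1 q, θ t / (γ / (t : ℝ) ^ 2) ^ r = 1 := by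
  obtain ⟨hγ0, hγ2⟩ := hγ
  have hγne : γ ≠ 0 := ne_of_gt hγ0
  set S := Finset.Icc 1 q with hS
  set v : ℕ → ℝ := fun t => (t : ℝ) ^ 2 / γ with hv
  have hvinj : Set.InjOn v S := by
    intro a ha b hb hab
    simp only [hv, div_left_inj' hγne] at hab
    have h2 : a ^ 2 = b ^ 2 := by exact_mod_cast hab
    exact Nat.pow_left_injective two_ne_zero h2
  have hcard : #S = q := by simp [hS]
  have hdeg : (Polynomial.X ^ (r - 1) : ℝ[X]).degree < (#S : ℕ) := by
    rw [hcard, Polynomial.degree_X_pow]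
    exact_mod_cast lt_of_lt_of_le (Nat.sub_lt hr1 one_pos) hrq
  have key : (Polynomial.X ^ (r - 1) : ℝ[X]) =
      Lagrange.interpolate S v (fun i => (v i) ^ (r - 1)) := by
    refine Lagrange.eq_interpolate_of_eval_eq _ hvinj hdeg fun i _ => by simp
  have h1 : (1 : ℝ) = ∑ t ∈ S, (v t) ^ (r - 1) *
      ∏ j ∈ S.erase t, ((v t - v j)⁻¹ * (1 - v j)) := by
    have := congrArg (Polynomial.eval (1 : ℝ)) key
    simpa [Lagrange.interpolate_apply, Lagrange.basis, Lagrange.basisDivisor,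
      Polynomial.eval_finset_sum, Polynomial.eval_prod] using this
  rw [h1]
  refine Finset.sum_congr rfl fun t ht => ?_
  have ht1 : 1 ≤ t := (Finset.mem_Icc.mp ht).1
  have htne : (t : ℝ) ≠ 0 := by positivity
  have hvt : v t ≠ 0 := by simp only [hv]; positivity
  have hDne : ∀ j ∈ S.erase t, v t - v j ≠ 0 := by
    intro j hj
    have hjS := Finset.mem_of_mem_erase hj
    have hjt := Finset.ne_of_mem_erase hj
    intro h
    exact hjt (hvinj hjS ht (sub_eq_zero.mp h).symm)
  -- rewrite the denominator product
  have hDprod : ∏ s ∈ S.erase t, (((t : ℝ) ^ 2 - (s : ℝ) ^ 2) / γ)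
      = ∏ j ∈ S.erase t, (v t - v j) := by
    refine Finset.prod_congr rfl fun j _ => ?_
    simp only [hv]; ring
  have hpow : (γ / (t : ℝ) ^ 2) ^ r = ((v t) ^ r)⁻¹ := by
    rw [hv]; rw [← inv_pow, inv_div]
  rw [hθ t, hDprod, hpow]
  have hrw : (v t) ^ r = (v t) ^ (r - 1) * v t := by
    rw [← pow_succ, Nat.sub_add_cancel hr1]
  rw [hrw, Finset.prod_mul_distrib, Finset.prod_inv_distrib]
  have hD : ∏ j ∈ S.erase t, (v t - v j) ≠ 0 :=
    Finset.prod_ne_zero_iff.mpr hDne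
  have hnum : ∏ s ∈ S.erase t, (1 - (s : ℝ) ^ 2 / γ) = ∏ j ∈ S.erase t, (1 - v j) := rfl
  rw [hnum]
  have hvt2 : γ * v t = (t : ℝ) ^ 2 := by simp only [hv]; field_simp
  field_simp
  linear_combination (∏ x ∈ S.erase t, (1 - v x)) * hvt2
end

section
/- Let q be a positive integer, γ_1, ..., γ_q distinct positive reals, and suppose θ_1, ..., θ_q satisfy the Vandermonde system ∑_{t=1}^q θ_t/γ_t^r = 1 for all 1 ≤ r ≤ q. Then ∑_{t=1}^q θ_t = 1 - ∏_{t=1}^q (1/γ_t - 1) / ∏_{t=1}^q (1/γ_t), i.e., ∑_{t=1}^q θ_t = 1 - ∏_{t=1}^q (1 - γ_t). -/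
theorem sum_theta_eq_one_sub_prod (q : ℕ) (hq : 1 ≤ q) (γ θ : ℕ → ℝ)
    (hpos : ∀ t ∈ Finset.Icc 1 q, 0 < γ t)
    (hdist : ∀ t ∈ Finset.Icc 1 q, ∀ s ∈ Finset.Icc 1 q, γ t = γ s → t = s)
    (hθ : ∀ r, 1 ≤ r → r ≤ q → ∑ t ∈ Finset.Icc 1 q, θ t / (γ t) ^ r = 1) :
    ∑ t ∈ Finset.Icc 1 q, θ t = 1 - ∏ t ∈ Finset.Icc 1 q, (1 - γ t) := by
  set P : Polynomial ℝ :=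
    1 - ∏ t ∈ Finset.Icc 1 q, (1 - Polynomial.C (γ t) * Polynomial.X) with hP
  have hdegP : P.natDegree < q + 1 := by
    have h1 : (∏ t ∈ Finset.Icc 1 q,
        (1 - Polynomial.C (γ t) * Polynomial.X)).natDegree ≤ q := by
      refine le_trans (Polynomial.natDegree_prod_le _ _) ?_
      calc ∑ t ∈ Finset.Icc 1 q, (1 - Polynomial.C (γ t) * Polynomial.X).natDegree
          ≤ ∑ _t ∈ Finset.Icc 1 q, 1 := by
            refine Finset.sum_le_sum fun t _ => ?_
            refine le_trans (Polynomial.natDegree_sub_le _ _) ?_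
            simp only [Polynomial.natDegree_one, max_le_iff]
            exact ⟨Nat.zero_le _, le_trans (Polynomial.natDegree_mul_le)
              (by simp [Polynomial.natDegree_X])⟩
        _ = q := by simp [Nat.card_Icc]
    have := Polynomial.natDegree_sub_le (1 : Polynomial ℝ)
      (∏ t ∈ Finset.Icc 1 q, (1 - Polynomial.C (γ t) * Polynomial.X))
    rw [← hP] at this
    refine Nat.lt_succ_of_le (le_trans this ?_)
    simpa [Polynomial.natDegree_one] using h1
  have hcoeff0 : P.coeff 0 = 0 := by
    rw [Polynomial.coeff_zero_eq_eval_zero, hP]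
    simp [Polynomial.eval_prod]
  have heval1 : P.eval 1 = 1 - ∏ t ∈ Finset.Icc 1 q, (1 - γ t) := by
    simp [hP, Polynomial.eval_prod]
  have hevalinv : ∀ t ∈ Finset.Icc 1 q, P.eval (γ t)⁻¹ = 1 := by
    intro t ht
    have hne : γ t ≠ 0 := ne_of_gt (hpos t ht)
    rw [hP]
    simp only [Polynomial.eval_sub, Polynomial.eval_one, Polynomial.eval_prod,
      Polynomial.eval_mul, Polynomial.eval_C, Polynomial.eval_X]
    rw [Finset.prod_eq_zero ht (by field_simp; ring)]
    ring
  have key : ∀ t ∈ Finset.Icc 1 q, θ t =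
      ∑ r ∈ Finset.range (q + 1), P.coeff r * (θ t * ((γ t)⁻¹) ^ r) := by
    intro t ht
    have := Polynomial.eval_eq_sum_range' hdegP ((γ t)⁻¹)
    calc θ t = θ t * P.eval ((γ t)⁻¹) := by rw [hevalinv t ht]; ring
      _ = θ t * ∑ r ∈ Finset.range (q + 1), P.coeff r * ((γ t)⁻¹) ^ r := by rw [this]
      _ = _ := by rw [Finset.mul_sum]; exact Finset.sum_congr rfl fun r _ => by ring
  calc ∑ t ∈ Finset.Icc 1 q, θ t
      = ∑ t ∈ Finset.Icc 1 q, ∑ r ∈ Finset.range (q + 1),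
        P.coeff r * (θ t * ((γ t)⁻¹) ^ r) := Finset.sum_congr rfl key
    _ = ∑ r ∈ Finset.range (q + 1), P.coeff r *
        (∑ t ∈ Finset.Icc 1 q, θ t / (γ t) ^ r) := by
        rw [Finset.sum_comm]
        refine Finset.sum_congr rfl fun r _ => ?_
        rw [Finset.mul_sum]
        refine Finset.sum_congr rfl fun t _ => ?_
        rw [div_eq_mul_inv, inv_pow]
    _ = ∑ r ∈ Finset.range (q + 1), P.coeff r * (1 : ℝ) ^ r := by
        refine Finset.sum_congr rfl fun r hr => ?_
        rcases Nat.eq_zero_or_pos r with h0 | h1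
        · subst h0; rw [hcoeff0]; ring
        · rw [hθ r h1 (by simpa using Nat.lt_succ_iff.mp (Finset.mem_range.mp hr))]
          simp
    _ = P.eval 1 := (Polynomial.eval_eq_sum_range' hdegP 1).symm
    _ = _ := heval1
end

section
/- Let q be a positive integer, γ ∈ (0, 1/2], and γ_t = γ/t² for 1 ≤ t ≤ q. If θ_1, ..., θ_q solve the Vandermonde system ∑_t θ_t/γ_t^r = 1 for 1 ≤ r ≤ q, then the sum ∑_{t=1}^q θ_t lies strictly between γ/(1 + π²/6) and 2γ; in particular ∑_{t=1}^q θ_t ∈ (0,1). -/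
open Polynomial Finset

-- Weierstrass lower bound
lemma weier (s : Finset ℕ) (f : ℕ → ℝ) (h0 : ∀ i ∈ s, 0 ≤ f i) (h1 : ∀ i ∈ s, f i ≤ 1) :
    1 - ∑ i ∈ s, f i ≤ ∏ i ∈ s, (1 - f i) := by
  induction s using Finset.induction_on with
  | empty => simp
  | @insert a s hxx ih =>
    rw [Finset.sum_insert hxx, Finset.prod_insert hxx]
    have h0' : ∀ i ∈ s, 0 ≤ f i := fun i hi => h0 i (Finset.mem_insert_of_mem hi)
    have h1' : ∀ i ∈ s, f i ≤ 1 := fun i hi => h1 i (Finset.mem_insert_of_mem hi)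
    have ih' := ih h0' h1'
    have ha0 : 0 ≤ f a := h0 a (Finset.mem_insert_self a s)
    have ha1 : f a ≤ 1 := h1 a (Finset.mem_insert_self a s)
    have hsum : 0 ≤ ∑ i ∈ s, f i := Finset.sum_nonneg h0'
    nlinarith [Finset.prod_nonneg (fun i hi => by linarith [h1' i hi] : ∀ i ∈ s, (0:ℝ) ≤ 1 - f i)]

lemma key_identity (q : ℕ) (hq : 1 ≤ q) (γ : ℝ) (hγ0 : 0 < γ)
    (θ : ℕ → ℝ)
    (hθ : ∀ r, 1 ≤ r → r ≤ q →
      ∑ t ∈ Finset.Icc 1 q, θ t / (γ / (t : ℝ) ^ 2) ^ r = 1) :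
    ∑ t ∈ Finset.Icc 1 q, θ t = 1 - ∏ t ∈ Finset.Icc 1 q, (1 - γ / (t:ℝ)^2) := by
  set I := Finset.Icc 1 q with hI
  set g : ℕ → ℝ := fun t => γ / (t:ℝ)^2 with hg
  have hgne : ∀ t ∈ I, g t ≠ 0 := by
    intro t ht
    have ht1 : 1 ≤ t := (Finset.mem_Icc.mp ht).1
    have : (0:ℝ) < (t:ℝ)^2 := by positivity
    exact ne_of_gt (div_pos hγ0 this)
  set p : Polynomial ℝ := ∏ t ∈ I, (1 - Polynomial.C (g t) * Polynomial.X) with hp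
  set P : Polynomial ℝ := 1 - p with hP
  have hfac : ∀ t : ℕ, (1 - Polynomial.C (g t) * Polynomial.X).natDegree ≤ 1 := by
    intro t
    refine le_trans (Polynomial.natDegree_sub_le _ _) ?_
    simp only [Polynomial.natDegree_one, max_le_iff]
    exact ⟨Nat.zero_le 1, le_trans Polynomial.natDegree_mul_le (by simp)⟩
  have hdeg : P.natDegree ≤ q := by
    have h1 : p.natDegree ≤ q := by
      refine le_trans (Polynomial.natDegree_prod_le I _) ?_
      refine le_trans (Finset.sum_le_sum (fun t _ => hfac t)) ?_
      simp [hI, Nat.card_Icc]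
    refine le_trans (Polynomial.natDegree_sub_le _ _) ?_
    simp only [Polynomial.natDegree_one, max_le_iff]
    exact ⟨Nat.zero_le q, h1⟩
  have hcoeff0 : P.coeff 0 = 0 := by
    rw [Polynomial.coeff_zero_eq_eval_zero]
    simp [hP, hp, Polynomial.eval_prod]
  have hevalyt : ∀ t ∈ I, P.eval (g t)⁻¹ = 1 := by
    intro t ht
    have : p.eval (g t)⁻¹ = 0 := by
      rw [hp, Polynomial.eval_prod]
      apply Finset.prod_eq_zero ht
      simp [mul_inv_cancel₀ (hgne t ht)]
    simp [hP, this]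
  have heval1 : P.eval 1 = 1 - ∏ t ∈ I, (1 - g t) := by
    simp [hP, hp, Polynomial.eval_prod]
  rw [← heval1]
  have hsum : ∀ x : ℝ, P.eval x = ∑ r ∈ Finset.range (q+1), P.coeff r * x ^ r :=
    fun x => Polynomial.eval_eq_sum_range' (lt_of_le_of_lt hdeg (Nat.lt_succ_self q)) x
  have step1 : ∑ t ∈ I, θ t = ∑ t ∈ I, θ t * P.eval (g t)⁻¹ := by
    apply Finset.sum_congr rfl
    intro t ht; rw [hevalyt t ht, mul_one]
  rw [step1]
  have step2 : ∑ t ∈ I, θ t * P.eval (g t)⁻¹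
      = ∑ r ∈ Finset.range (q+1), P.coeff r * ∑ t ∈ I, θ t * ((g t)⁻¹) ^ r := by
    simp_rw [hsum, Finset.mul_sum]
    rw [Finset.sum_comm]
    apply Finset.sum_congr rfl
    intro r _
    apply Finset.sum_congr rfl
    intro t _
    ring
  rw [step2, hsum 1]
  apply Finset.sum_congr rfl
  intro r hr
  rcases Nat.eq_zero_or_pos r with h0 | h1
  · simp [h0, hcoeff0]
  · have hrq : r ≤ q := by have := Finset.mem_range.mp hr; omega
    have : ∑ t ∈ I, θ t * ((g t)⁻¹) ^ r = 1 := by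
      rw [← hθ r h1 hrq]
      apply Finset.sum_congr rfl
      intro t _
      rw [div_eq_mul_inv, ← inv_pow]
    rw [this, one_pow]

theorem sum_theta_bounds (q : ℕ) (hq : 1 ≤ q) (γ : ℝ) (hγ : γ ∈ Set.Ioc (0:ℝ) (1/2))
    (θ : ℕ → ℝ)
    (hθ : ∀ r, 1 ≤ r → r ≤ q →
      ∑ t ∈ Finset.Icc 1 q, θ t / (γ / (t : ℝ) ^ 2) ^ r = 1) :
    γ / (1 + Real.pi ^ 2 / 6) < ∑ t ∈ Finset.Icc 1 q, θ t ∧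
    ∑ t ∈ Finset.Icc 1 q, θ t < 2 * γ ∧
    0 < ∑ t ∈ Finset.Icc 1 q, θ t ∧ ∑ t ∈ Finset.Icc 1 q, θ t < 1 := by
  obtain ⟨hγ0, hγ2⟩ := hγ
  rw [key_identity q hq γ hγ0 θ hθ]
  set I := Finset.Icc 1 q with hI
  have hfac : ∀ t ∈ I, 0 ≤ γ / (t:ℝ)^2 ∧ γ / (t:ℝ)^2 ≤ γ := by
    intro t ht
    have ht1 : 1 ≤ t := (Finset.mem_Icc.mp ht).1
    have ht1' : (1:ℝ) ≤ (t:ℝ)^2 := by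
      have : (1:ℝ) ≤ (t:ℝ) := by exact_mod_cast ht1
      nlinarith
    constructor
    · positivity
    · rw [div_le_iff₀ (by linarith)]; nlinarith
  set S := ∏ t ∈ I, (1 - γ / (t:ℝ)^2) with hS
  have hSpos : 0 < S := by
    apply Finset.prod_pos
    intro t ht
    have := hfac t ht
    linarith
  have h1I : 1 ∈ I := Finset.mem_Icc.mpr ⟨le_refl 1, hq⟩
  have hSle : S ≤ 1 - γ := by
    rw [hS, ← Finset.mul_prod_erase I _ h1I]
    have hg1 : γ / ((1:ℕ):ℝ)^2 = γ := by norm_num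
    rw [hg1]
    have hrest : ∏ t ∈ I.erase 1, (1 - γ / (t:ℝ)^2) ≤ 1 := by
      apply Finset.prod_le_one
      · intro t ht
        have := hfac t (Finset.mem_of_mem_erase ht); linarith
      · intro t ht
        have := hfac t (Finset.mem_of_mem_erase ht); linarith
    nlinarith
  have hpi2 : Real.pi ^ 2 < 12 := by nlinarith [Real.pi_lt_d2, Real.pi_gt_three]
  have hpisum : ∑ t ∈ I, (1:ℝ) / (t:ℝ)^2 ≤ Real.pi ^ 2 / 6 := by
    apply sum_le_hasSum I _ hasSum_zeta_two
    intro t _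
    positivity
  have hsumg : ∑ t ∈ I, γ / (t:ℝ)^2 ≤ γ * (Real.pi ^ 2 / 6) := by
    have : ∑ t ∈ I, γ / (t:ℝ)^2 = γ * ∑ t ∈ I, (1:ℝ) / (t:ℝ)^2 := by
      rw [Finset.mul_sum]; apply Finset.sum_congr rfl; intro t _; ring
    rw [this]
    exact mul_le_mul_of_nonneg_left hpisum (le_of_lt hγ0)
  have hSge : 1 - ∑ t ∈ I, γ / (t:ℝ)^2 ≤ S :=
    weier I _ (fun t ht => (hfac t ht).1) (fun t ht => by have := hfac t ht; linarith)
  have hpisq : (0:ℝ) ≤ Real.pi ^ 2 := sq_nonneg _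
  refine ⟨?_, ?_, ?_, ?_⟩
  · have h1 : γ / (1 + Real.pi ^ 2 / 6) < γ := by
      apply div_lt_self hγ0
      nlinarith
    linarith
  · nlinarith
  · have : γ / (1 + Real.pi ^ 2 / 6) > 0 := by positivity
    nlinarith [div_lt_self hγ0 (by nlinarith : (1:ℝ) < 1 + Real.pi^2/6)]
  · linarith
end

section
/- Let q be a positive integer, γ ∈ (0, 1/2], γ_t = γ/t², and θ_t = (∏_{s≠t,1≤s≤q}(1 - s²/γ)) / ((t²/γ)∏_{s≠t,1≤s≤q}((t²-s²)/γ)). Then |θ_t| ≤ 4γ/t² for all 1 ≤ t ≤ q. -/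
open Finset

lemma G1 (a m : ℕ) : (∏ s ∈ Icc 1 m, (a + s)) * Nat.factorial a = Nat.factorial (a + m) := by
  induction m with
  | zero => simp
  | succ m ih =>
    rw [Finset.prod_Icc_succ_top (by omega), mul_right_comm, ih,
      show a + (m+1) = (a+m)+1 by ring, Nat.factorial_succ]
    ring

lemma shiftP {M : Type*} [CommMonoid M] (f : ℕ → M) (a m : ℕ) :
    ∏ s ∈ Icc (a+1) (a+m), f s = ∏ u ∈ Icc 1 m, f (a + u) := by
  rw [← Finset.map_add_left_Icc, Finset.prod_map]
  rfl

lemma prodIcc (n : ℕ) : (∏ i ∈ Icc 1 n, i) = Nat.factorial n := by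
  rw [← Finset.Ico_add_one_right_eq_Icc, Finset.prod_Ico_eq_prod_range]
  rw [← Finset.prod_range_add_one_eq_factorial n]
  exact Finset.prod_congr rfl fun i _ => by omega

lemma NA1 (t : ℕ) (ht : 1 ≤ t) : ∏ s ∈ Icc 1 (t-1), (t - s) = Nat.factorial (t-1) := by
  rw [← prodIcc (t-1)]
  apply Finset.prod_nbij' (fun s => t - s) (fun s => t - s)
  · intro a ha; simp only [Finset.mem_Icc] at *; omega
  · intro a ha; simp only [Finset.mem_Icc] at *; omega
  · intro a ha; simp only [Finset.mem_Icc] at *; omega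
  · intro a ha; simp only [Finset.mem_Icc] at *; omega
  · intro a ha; rfl

lemma NB1 (t q : ℕ) (ht : t ≤ q) : ∏ s ∈ Icc (t+1) q, (s - t) = Nat.factorial (q-t) := by
  rw [show q = t + (q - t) by omega, shiftP]
  simpa using prodIcc (q-t)

lemma NB2 (t q : ℕ) (ht : t ≤ q) : (∏ s ∈ Icc (t+1) q, (s + t)) * Nat.factorial (2*t) = Nat.factorial (q+t) := by
  rw [show q = t + (q - t) by omega, shiftP (fun s => s + t)]
  have := G1 (2*t) (q-t)
  rw [show 2*t + (q-t) = t + (q-t) + t by omega] at this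
  rw [← this]
  congr 1
  apply Finset.prod_congr rfl
  intro u _; omega

lemma NA2 (t : ℕ) (ht : 1 ≤ t) : (∏ s ∈ Icc 1 (t-1), (t + s)) * Nat.factorial t = Nat.factorial (2*t-1) := by
  have := G1 t (t-1)
  rw [show t + (t-1) = 2*t-1 by omega] at this
  rw [← this]

lemma N3 (t q : ℕ) (ht : t ≤ q) : (Nat.factorial q)^2 ≤ Nat.factorial (q-t) * Nat.factorial (q+t) := by
  have h1 := Nat.choose_mul_factorial_mul_factorial ht
  have h2 := Nat.choose_mul_factorial_mul_factorial (show t ≤ q + t by omega)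
  have h3 : Nat.choose q t ≤ Nat.choose (q+t) t := Nat.choose_le_choose t (by omega)
  have h4 : q + t - t = q := by omega
  rw [h4] at h2
  calc (Nat.factorial q)^2 = (Nat.choose q t * Nat.factorial t * Nat.factorial (q-t)) * Nat.factorial q := by rw [h1]; ring
    _ ≤ (Nat.choose (q+t) t * Nat.factorial t * Nat.factorial (q-t)) * Nat.factorial q := by
        have : Nat.choose q t * Nat.factorial t ≤ Nat.choose (q+t) t * Nat.factorial t := Nat.mul_le_mul_right _ h3
        exact Nat.mul_le_mul_right _ (Nat.mul_le_mul_right _ this)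
    _ = Nat.factorial (q-t) * (Nat.choose (q+t) t * Nat.factorial t * Nat.factorial q) := by ring
    _ = Nat.factorial (q-t) * Nat.factorial (q+t) := by rw [h2]

lemma Nfinal (t q : ℕ) (ht1 : 1 ≤ t) (htq : t ≤ q) :
    (∏ s ∈ (Icc 1 q).erase t, s)^2 ≤
      2 * ((∏ s ∈ Icc 1 (t-1), ((t-s)*(t+s))) * ∏ s ∈ Icc (t+1) q, ((s-t)*(s+t))) := by
  rw [Finset.prod_mul_distrib, Finset.prod_mul_distrib]
  have hA1 := NA1 t ht1
  have hA2 := NA2 t ht1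
  have hB1 := NB1 t q htq
  have hB2 := NB2 t q htq
  set W1 := ∏ s ∈ Icc 1 (t-1), (t - s)
  set W2 := ∏ s ∈ Icc 1 (t-1), (t + s)
  set W3 := ∏ s ∈ Icc (t+1) q, (s - t)
  set W4 := ∏ s ∈ Icc (t+1) q, (s + t)
  -- key identity : 2 * t^2 * (W1*W2*(W3*W4)) = (q-t)! * (q+t)!
  have hfact1 : t * Nat.factorial (t-1) = Nat.factorial t := by
    conv_rhs => rw [show t = (t-1)+1 by omega]
    rw [Nat.factorial_succ]
    congr 1; omega
  have hfact2 : (2*t) * Nat.factorial (2*t-1) = Nat.factorial (2*t) := by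
    conv_rhs => rw [show 2*t = (2*t-1)+1 by omega]
    rw [Nat.factorial_succ]
    congr 1; omega
  have hposA : 0 < Nat.factorial t * Nat.factorial (2*t) :=
    Nat.mul_pos (Nat.factorial_pos _) (Nat.factorial_pos _)
  have hkey : 2 * t^2 * (W1 * W2 * (W3 * W4)) = Nat.factorial (q-t) * Nat.factorial (q+t) := by
    apply Nat.eq_of_mul_eq_mul_right hposA
    calc 2 * t^2 * (W1 * W2 * (W3 * W4)) * (Nat.factorial t * Nat.factorial (2*t))
        = 2 * t^2 * (W1 * (W2 * Nat.factorial t) * (W3 * (W4 * Nat.factorial (2*t)))) := by ring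
      _ = 2 * t^2 * (Nat.factorial (t-1) * Nat.factorial (2*t-1) *
            (Nat.factorial (q-t) * Nat.factorial (q+t))) := by rw [hA1, hA2, hB1, hB2]
      _ = (t * Nat.factorial (t-1)) * ((2*t) * Nat.factorial (2*t-1)) *
            (Nat.factorial (q-t) * Nat.factorial (q+t)) := by ring
      _ = Nat.factorial (q-t) * Nat.factorial (q+t) * (Nat.factorial t * Nat.factorial (2*t)) := by
            rw [hfact1, hfact2]; ring
  -- t * ∏_E s = q!
  have htmem : t ∈ Icc 1 q := by simp [Finset.mem_Icc]; omega
  have hE : t * ∏ s ∈ (Icc 1 q).erase t, s = Nat.factorial q := by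
    rw [Finset.mul_prod_erase (Icc 1 q) (fun s => s) htmem]; exact prodIcc q
  have h3 := N3 t q htq
  have hsq : t^2 * (∏ s ∈ (Icc 1 q).erase t, s)^2 = (Nat.factorial q)^2 := by
    rw [← hE]; ring
  have : t^2 * (∏ s ∈ (Icc 1 q).erase t, s)^2 ≤ t^2 * (2 * (W1 * W2 * (W3 * W4))) := by
    rw [hsq, show t^2 * (2 * (W1 * W2 * (W3 * W4))) = 2 * t^2 * (W1 * W2 * (W3 * W4)) by ring,
      hkey]
    exact h3
  have htpos : 0 < t^2 := by positivity
  calc (∏ s ∈ (Icc 1 q).erase t, s)^2 ≤ 2 * (W1 * W2 * (W3 * W4)) :=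
        Nat.le_of_mul_le_mul_left this htpos
    _ = 2 * (W1 * W2 * (W3 * W4)) := rfl

theorem abs_theta_le (q : ℕ) (hq : 1 ≤ q) (γ : ℝ) (hγ : γ ∈ Set.Ioc (0:ℝ) (1/2))
    (θ : ℕ → ℝ)
    (hθ : ∀ t, θ t = (∏ s ∈ (Finset.Icc 1 q).erase t, (1 - (s : ℝ) ^ 2 / γ)) /
        (((t : ℝ) ^ 2 / γ) *
          ∏ s ∈ (Finset.Icc 1 q).erase t, (((t : ℝ) ^ 2 - (s : ℝ) ^ 2) / γ)))
    (t : ℕ) (ht1 : 1 ≤ t) (htq : t ≤ q) :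
    |θ t| ≤ 4 * γ / (t : ℝ) ^ 2 := by
  obtain ⟨hγ0, hγ2⟩ := hγ
  set E := (Finset.Icc 1 q).erase t with hEdef
  have ht0 : (1:ℝ) ≤ (t:ℝ) := by exact_mod_cast ht1
  have htsq : (0:ℝ) < (t:ℝ)^2 := by positivity
  -- split of E
  have hsplit : E = Icc 1 (t-1) ∪ Icc (t+1) q := by
    ext a
    simp only [hEdef, Finset.mem_erase, Finset.mem_Icc, Finset.mem_union]
    omega
  have hdisj : Disjoint (Icc 1 (t-1)) (Icc (t+1) q) := by
    rw [Finset.disjoint_left]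
    intro a ha hb
    simp only [Finset.mem_Icc] at ha hb
    omega
  -- cast of abs product
  have hP2cast : ∏ s ∈ E, |(t:ℝ)^2 - (s:ℝ)^2| =
      (((∏ s ∈ Icc 1 (t-1), ((t-s)*(t+s))) * ∏ s ∈ Icc (t+1) q, ((s-t)*(s+t)) : ℕ) : ℝ) := by
    rw [hsplit, Finset.prod_union hdisj]
    push_cast
    congr 1
    · apply Finset.prod_congr rfl
      intro s hs
      simp only [Finset.mem_Icc] at hs
      have hst : s ≤ t := by omega
      have h1 : ((t - s : ℕ) : ℝ) = (t:ℝ) - s := Nat.cast_sub hst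
      have h2 : (s:ℝ) ≤ (t:ℝ) := by exact_mod_cast hst
      rw [abs_of_nonneg (by nlinarith : (0:ℝ) ≤ (t:ℝ)^2 - (s:ℝ)^2)]
      push_cast [h1]
      ring
    · apply Finset.prod_congr rfl
      intro s hs
      simp only [Finset.mem_Icc] at hs
      have hst : t ≤ s := by omega
      have h1 : ((s - t : ℕ) : ℝ) = (s:ℝ) - t := Nat.cast_sub hst
      have h2 : (t:ℝ) ≤ (s:ℝ) := by exact_mod_cast hst
      rw [abs_of_nonpos (by nlinarith : (t:ℝ)^2 - (s:ℝ)^2 ≤ 0)]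
      push_cast [h1]
      ring
  have hP1cast : ∏ s ∈ E, (s:ℝ)^2 = (((∏ s ∈ E, s : ℕ)):ℝ)^2 := by
    push_cast
    rw [Finset.prod_pow]
  -- key inequality P1 ≤ 2 P2
  set P1 := ∏ s ∈ E, (s:ℝ)^2 with hP1def
  set P2 := ∏ s ∈ E, |(t:ℝ)^2 - (s:ℝ)^2| with hP2def
  have hP1P2 : P1 ≤ 2 * P2 := by
    rw [hP1cast, hP2cast]
    exact_mod_cast Nfinal t q ht1 htq
  have hP2pos : 0 < P2 := by
    rw [hP2def]
    apply Finset.prod_pos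
    intro s hs
    simp only [hEdef, Finset.mem_erase, Finset.mem_Icc] at hs
    have : (s:ℝ)^2 ≠ (t:ℝ)^2 := by
      intro h
      have hnat : s^2 = t^2 := by exact_mod_cast h
      have : s = t := by nlinarith [Nat.le_total s t]
      exact hs.1 this
    have := sub_ne_zero.mpr (Ne.symm this)
    exact abs_pos.mpr this
  have hP1pos : 0 < P1 := by
    rw [hP1def]
    apply Finset.prod_pos
    intro s hs
    simp only [hEdef, Finset.mem_erase, Finset.mem_Icc] at hs
    have : (1:ℝ) ≤ (s:ℝ) := by exact_mod_cast hs.2.1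
    positivity
  set n := E.card with hn
  have hγn : (0:ℝ) < γ ^ n := by positivity
  -- numerator bound
  have hnum : |∏ s ∈ E, (1 - (s:ℝ)^2/γ)| ≤ P1 / γ^n := by
    rw [Finset.abs_prod]
    have step : ∏ s ∈ E, |1 - (s:ℝ)^2/γ| ≤ ∏ s ∈ E, (s:ℝ)^2/γ := by
      apply Finset.prod_le_prod
      · intro s _; exact abs_nonneg _
      · intro s hs
        simp only [hEdef, Finset.mem_erase, Finset.mem_Icc] at hs
        have hs1 : (1:ℝ) ≤ (s:ℝ) := by exact_mod_cast hs.2.1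
        have hx : (1:ℝ) ≤ (s:ℝ)^2/γ := by
          rw [le_div_iff₀ hγ0]
          nlinarith
        rw [abs_sub_comm, abs_of_nonneg (by linarith)]
        linarith
    calc ∏ s ∈ E, |1 - (s:ℝ)^2/γ| ≤ ∏ s ∈ E, (s:ℝ)^2/γ := step
      _ = P1 / γ^n := by rw [Finset.prod_div_distrib, Finset.prod_const, hP1def, hn]
  -- denominator
  have hden : |((t:ℝ)^2/γ) * ∏ s ∈ E, (((t:ℝ)^2 - (s:ℝ)^2)/γ)| = ((t:ℝ)^2/γ) * (P2 / γ^n) := by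
    rw [abs_mul, Finset.abs_prod, abs_of_pos (by positivity : (0:ℝ) < (t:ℝ)^2/γ)]
    congr 1
    calc ∏ s ∈ E, |((t:ℝ)^2 - (s:ℝ)^2)/γ| = ∏ s ∈ E, (|(t:ℝ)^2 - (s:ℝ)^2|/γ) := by
          apply Finset.prod_congr rfl
          intro s _
          rw [abs_div, abs_of_pos hγ0]
      _ = P2 / γ^n := by rw [Finset.prod_div_distrib, Finset.prod_const, hP2def, hn]
  have hdenpos : (0:ℝ) < ((t:ℝ)^2/γ) * (P2 / γ^n) := by positivity
  rw [hθ t, abs_div, hden]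
  have hstep : |∏ s ∈ E, (1 - (s:ℝ)^2/γ)| / (((t:ℝ)^2/γ) * (P2/γ^n)) ≤
      (P1/γ^n) / (((t:ℝ)^2/γ) * (P2/γ^n)) := by
    gcongr
  refine hstep.trans ?_
  have heq : (P1/γ^n) / (((t:ℝ)^2/γ) * (P2/γ^n)) = P1 * γ / ((t:ℝ)^2 * P2) := by
    field_simp
  rw [heq, div_le_div_iff₀ (by positivity) htsq]
  nlinarith [mul_pos htsq hP2pos, mul_pos hγ0 hP2pos, mul_pos (mul_pos hγ0 hP2pos) htsq]
end

section
/- Let α ∈ (1,2] and for k ≥ 0 set θ_k = 1/(k+1)^{α/(2α-1)} and p_k = (k+1)^{(α-1)²/(2α-1)}. Then (1-θ_k) p_{k+1} ≤ (1 - θ_k/2) p_k for all k ≥ 0. -/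
theorem theta_pk_relation (α : ℝ) (hα : α ∈ Set.Ioc (1:ℝ) 2) (θ p : ℕ → ℝ)
    (hθ : ∀ k, θ k = 1 / ((k : ℝ) + 1) ^ (α / (2 * α - 1)))
    (hp : ∀ k, p k = ((k : ℝ) + 1) ^ ((α - 1) ^ 2 / (2 * α - 1))) (k : ℕ) :
    (1 - θ k) * p (k + 1) ≤ (1 - θ k / 2) * p k := by
  obtain ⟨hα1, hα2⟩ := hα
  set n : ℝ := (k : ℝ) + 1 with hn
  have hn1 : (1:ℝ) ≤ n := by simp [hn]
  have hn0 : (0:ℝ) < n := by positivity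
  have hden : (0:ℝ) < 2 * α - 1 := by linarith
  set e1 : ℝ := α / (2 * α - 1) with he1
  set β : ℝ := (α - 1) ^ 2 / (2 * α - 1) with hβ
  have he1pos : 0 < e1 := by positivity
  have he1le : e1 ≤ 1 := by
    rw [he1, div_le_one hden]; linarith
  have hβ0 : 0 ≤ β := by positivity
  have hβ13 : β ≤ 1/3 := by
    rw [hβ, div_le_div_iff₀ hden (by norm_num)]
    nlinarith [sq_nonneg (α - 2), sq_nonneg (3*α - 2)]
  have hA : (0:ℝ) < n ^ β := Real.rpow_pos_of_pos hn0 _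
  have hθk : θ k = 1 / n ^ e1 := hθ k
  have hpk : p k = n ^ β := hp k
  have hpk1 : p (k+1) = (n + 1) ^ β := by
    rw [hp (k+1)]; push_cast; ring_nf; congr 1; rw [hn]; ring
  have hne1pos : (0:ℝ) < n ^ e1 := Real.rpow_pos_of_pos hn0 _
  -- θ k ≤ 1
  have hθle1 : θ k ≤ 1 := by
    rw [hθk, div_le_one hne1pos]
    exact Real.one_le_rpow hn1 he1pos.le
  -- θ k ≥ 1/n
  have hθge : 1 / n ≤ θ k := by
    rw [hθk]
    apply div_le_div_of_nonneg_left one_pos.le hne1pos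
    calc n ^ e1 ≤ n ^ (1:ℝ) := Real.rpow_le_rpow_of_exponent_le hn1 he1le
    _ = n := Real.rpow_one n
  -- Bernoulli: (n+1)^β ≤ (1 + 1/(3n)) * n^β
  have hber : (n + 1) ^ β ≤ (1 + 1/(3*n)) * n ^ β := by
    have h1 : (n + 1) ^ β = (1 + 1/n) ^ β * n ^ β := by
      rw [← Real.mul_rpow (by positivity) hn0.le]
      congr 1
      field_simp
    rw [h1]
    apply mul_le_mul_of_nonneg_right _ hA.le
    calc (1 + 1/n) ^ β ≤ 1 + β * (1/n) :=
          rpow_one_add_le_one_add_mul_self (le_trans (by norm_num : (-1:ℝ) ≤ 0) (by positivity)) hβ0 (by linarith)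
    _ ≤ 1 + 1/(3*n) := by
        have : β * (1/n) ≤ (1/3) * (1/n) :=
          mul_le_mul_of_nonneg_right hβ13 (by positivity)
        rw [one_div, one_div, mul_inv] at *
        linarith
  rw [hpk, hpk1]
  have h13 : 1 + 1/(3*n) ≤ 1 + θ k / 2 := by
    have : 1/(3*n) ≤ 1/(2*n) := by
      apply div_le_div_of_nonneg_left one_pos.le (by positivity) (by linarith)
    have h2 : 1/(2*n) ≤ θ k / 2 := by
      rw [div_le_div_iff₀ (by positivity) (by norm_num)]
      have := mul_le_mul_of_nonneg_left hθge (by positivity : (0:ℝ) ≤ 2*n)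
      calc (1:ℝ)*2 = 2*n*(1/n) := by field_simp
      _ ≤ 2*n*θ k := this
      _ = θ k * (2*n) := by ring
    linarith
  have hθ0 : 0 ≤ θ k := le_trans (by positivity) hθge
  calc (1 - θ k) * (n + 1) ^ β ≤ (1 - θ k) * ((1 + θ k / 2) * n ^ β) := by
        apply mul_le_mul_of_nonneg_left _ (by linarith)
        exact hber.trans (mul_le_mul_of_nonneg_right h13 hA.le)
  _ ≤ (1 - θ k / 2) * n ^ β := by nlinarith [mul_nonneg (mul_nonneg hθ0 hθ0) hA.le]
end

section
/- Let ψ(w) = ‖w‖^α for w ∈ ℝⁿ with α ∈ (1,2]. Then for all u, v ∈ ℝⁿ, |ψ(u+v) - ψ(u) - ⟪∇ψ(u), v⟫| ≤ 2^{2-α}‖v‖^α, where ∇ψ(u) = α‖u‖^{α-2}u (interpreted as 0 when u = 0). -/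
open scoped RealInnerProductSpace

section Aux

lemma sq_rpow_comm {x : ℝ} (hx : 0 ≤ x) (β : ℝ) : (x ^ β) ^ 2 = (x ^ 2) ^ β := by
  rw [← Real.rpow_natCast (x ^ β) 2, ← Real.rpow_natCast x 2,
    ← Real.rpow_mul hx, ← Real.rpow_mul hx]
  norm_num [mul_comm]


lemma aux_concave {β : ℝ} (hβ0 : 0 ≤ β) (hβ1 : β ≤ 1) {r s : ℝ} (hr : 0 ≤ r) (hs : 0 ≤ s) :
    r ^ β + s ^ β ≤ 2 ^ (1 - β) * (r + s) ^ β := by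
  have hc := (Real.concaveOn_rpow hβ0 hβ1).2 (Set.mem_Ici.2 hr) (Set.mem_Ici.2 hs)
    (by norm_num : (0:ℝ) ≤ 1/2) (by norm_num : (0:ℝ) ≤ 1/2) (by norm_num)
  simp only [smul_eq_mul] at hc
  have h2 : ((1:ℝ)/2 * r + 1/2 * s) ^ β = (r+s) ^ β / 2 ^ β := by
    rw [show (1:ℝ)/2 * r + 1/2 * s = (r+s)/2 by ring,
      Real.div_rpow (by linarith) (by norm_num)]
  rw [h2] at hc
  have h3 : (2:ℝ) ^ (1-β) = 2 / 2 ^ β := by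
    rw [Real.rpow_sub (by norm_num), Real.rpow_one]
  rw [h3]
  have hp : (0:ℝ) < 2 ^ β := Real.rpow_pos_of_pos (by norm_num) β
  rw [div_mul_eq_mul_div, le_div_iff₀ hp]
  have := mul_le_mul_of_nonneg_right hc hp.le
  rw [div_mul_cancel₀ _ hp.ne'] at this
  linarith

lemma aux_subadd {β : ℝ} (hβ0 : 0 ≤ β) (hβ1 : β ≤ 1) {r s : ℝ} (hr : 0 ≤ r) (hs : 0 ≤ s) :
    |r ^ β - s ^ β| ≤ |r - s| ^ β := by
  have key : ∀ x y : ℝ, 0 ≤ x → 0 ≤ y → x ≤ y → y ^ β - x ^ β ≤ (y - x) ^ β := by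
    intro x y hx hy hxy
    have h := NNReal.rpow_add_le_add_rpow (Real.toNNReal x) (Real.toNNReal (y - x)) hβ0 hβ1
    have h' : ((Real.toNNReal x + Real.toNNReal (y-x) : NNReal) : ℝ) ^ β
        ≤ (Real.toNNReal x : ℝ) ^ β + (Real.toNNReal (y-x) : ℝ) ^ β := by
      exact_mod_cast h
    rw [NNReal.coe_add, Real.coe_toNNReal _ hx, Real.coe_toNNReal _ (by linarith)] at h'
    rw [show x + (y - x) = y by ring] at h'
    linarith
  rcases le_total s r with h | h
  · rw [abs_of_nonneg (by linarith : (0:ℝ) ≤ r - s),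
      abs_of_nonneg (sub_nonneg.2 (Real.rpow_le_rpow hs h hβ0))]
    linarith [key s r hs hr h]
  · rw [show |r - s| = s - r by rw [abs_sub_comm]; exact abs_of_nonneg (by linarith),
      show |r ^ β - s ^ β| = s ^ β - r ^ β by
        rw [abs_sub_comm]; exact abs_of_nonneg (sub_nonneg.2 (Real.rpow_le_rpow hr h hβ0))]
    linarith [key r s hr hs h]

variable {F : Type*} [NormedAddCommGroup F] [InnerProductSpace ℝ F]

set_option maxHeartbeats 1000000 in
lemma grad_holder {α : ℝ} (hα1 : 1 < α) (hα2 : α < 2) (a b : F) :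
    ‖‖a‖ ^ (α - 2) • a - ‖b‖ ^ (α - 2) • b‖ ≤ 2 ^ (2 - α) * ‖a - b‖ ^ (α - 1) := by
  have hβ0 : (0:ℝ) < α - 1 := by linarith
  have hβ1 : α - 1 ≤ 1 := by linarith
  have hK1 : (1:ℝ) ≤ 2 ^ (2 - α) := Real.one_le_rpow (by norm_num) (by linarith)
  have hKpos : (0:ℝ) < 2 ^ (2 - α) := by positivity
  -- trivial cases
  by_cases ha : a = 0
  · subst ha
    by_cases hb : b = 0
    · simp [hb]
      positivity
    · have hbn : (0:ℝ) < ‖b‖ := norm_pos_iff.2 hb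
      simp only [smul_zero, zero_sub, norm_neg, norm_smul, Real.norm_eq_abs,
        abs_of_nonneg (Real.rpow_nonneg (norm_nonneg b) (α-2))]
      rw [show ‖b‖ ^ (α-2) * ‖b‖ = ‖b‖ ^ (α-1) by
        rw [show α - 1 = (α-2) + 1 by ring, Real.rpow_add_one hbn.ne']]
      nlinarith [Real.rpow_pos_of_pos hbn (α-1)]
  by_cases hb : b = 0
  · subst hb
    have han : (0:ℝ) < ‖a‖ := norm_pos_iff.2 ha
    simp only [smul_zero, sub_zero, norm_smul, Real.norm_eq_abs,
      abs_of_nonneg (Real.rpow_nonneg (norm_nonneg a) (α-2))]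
    rw [show ‖a‖ ^ (α-2) * ‖a‖ = ‖a‖ ^ (α-1) by
      rw [show α - 1 = (α-2) + 1 by ring, Real.rpow_add_one han.ne']]
    nlinarith [Real.rpow_pos_of_pos han (α-1)]
  -- main case : a ≠ 0, b ≠ 0
  set r := ‖a‖ with hrdef
  set s := ‖b‖ with hsdef
  have hr : (0:ℝ) < r := norm_pos_iff.2 ha
  have hs : (0:ℝ) < s := norm_pos_iff.2 hb
  set c := ⟪a, b⟫ with hcdef
  have hc : |c| ≤ r * s := abs_real_inner_le_norm a b
  set R := r ^ (α - 1) with hRdef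
  set S := s ^ (α - 1) with hSdef
  set K := (2:ℝ) ^ (2 - α) with hKdef
  have hRpos : 0 < R := Real.rpow_pos_of_pos hr _
  have hSpos : 0 < S := Real.rpow_pos_of_pos hs _
  -- reduce to squares
  have hRHSnn : 0 ≤ K * ‖a - b‖ ^ (α - 1) := by positivity
  have hsq : ‖‖a‖ ^ (α - 2) • a - ‖b‖ ^ (α - 2) • b‖ ^ 2 ≤ (K * ‖a - b‖ ^ (α - 1)) ^ 2 := by
    -- expand left square
    have hL : ‖r ^ (α - 2) • a - s ^ (α - 2) • b‖ ^ 2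
        = R ^ 2 - 2 * (r ^ (α-2) * s ^ (α-2)) * c + S ^ 2 := by
      rw [@norm_sub_sq_real]
      rw [norm_smul, norm_smul, Real.norm_eq_abs, Real.norm_eq_abs,
        abs_of_nonneg (Real.rpow_nonneg hr.le _), abs_of_nonneg (Real.rpow_nonneg hs.le _),
        real_inner_smul_left, real_inner_smul_right]
      have e1 : r ^ (α-2) * r = R := by
        rw [hRdef, show α - 1 = (α-2) + 1 by ring, Real.rpow_add_one hr.ne']
      have e2 : s ^ (α-2) * s = S := by
        rw [hSdef, show α - 1 = (α-2) + 1 by ring, Real.rpow_add_one hs.ne']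
      rw [← hcdef, ← hrdef, ← hsdef]
      nlinarith [e1, e2]
    have hRS : R * S = (r ^ (α-2) * s ^ (α-2)) * (r * s) := by
      rw [hRdef, hSdef, show α - 1 = (α-2) + 1 by ring,
        Real.rpow_add_one hr.ne', Real.rpow_add_one hs.ne']
      ring
    have hA : ‖a - b‖ ^ 2 = r ^ 2 - 2 * c + s ^ 2 := by
      rw [@norm_sub_sq_real]
    -- weights
    set lam := (r * s - c) / (2 * (r * s)) with hlam
    set mu := (r * s + c) / (2 * (r * s)) with hmu
    have hrs : (0:ℝ) < r * s := by positivity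
    have hlam0 : 0 ≤ lam := by
      apply div_nonneg _ (by positivity)
      have := (abs_le.1 hc).2; linarith
    have hmu0 : 0 ≤ mu := by
      apply div_nonneg _ (by positivity)
      have := (abs_le.1 hc).1; linarith
    have hsum : lam + mu = 1 := by
      rw [hlam, hmu]; field_simp; ring
    -- concavity of rpow
    have hconc := (Real.concaveOn_rpow (by linarith : (0:ℝ) ≤ α - 1) hβ1).2
      (Set.mem_Ici.2 (sq_nonneg (r+s))) (Set.mem_Ici.2 (sq_nonneg (r-s))) hlam0 hmu0 hsum
    simp only [smul_eq_mul] at hconc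
    have harg : lam * (r+s)^2 + mu * (r-s)^2 = r ^ 2 - 2 * c + s ^ 2 := by
      rw [hlam, hmu]; field_simp; ring
    rw [harg] at hconc
    -- endpoint inequalities
    have hE1 : (R + S) ^ 2 ≤ K ^ 2 * ((r+s)^2) ^ (α-1) := by
      have h1 : R + S ≤ K * (r+s) ^ (α-1) := by
        have := aux_concave (by linarith : (0:ℝ) ≤ α-1) hβ1 hr.le hs.le
        rwa [show (1:ℝ) - (α-1) = 2 - α by ring] at this
      have h2 : (K * (r+s) ^ (α-1)) ^ 2 = K ^ 2 * ((r+s)^2) ^ (α-1) := by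
        rw [mul_pow, sq_rpow_comm (by linarith : (0:ℝ) ≤ r + s)]
      nlinarith [hRpos, hSpos]
    have hE2 : (R - S) ^ 2 ≤ K ^ 2 * ((r-s)^2) ^ (α-1) := by
      have h1 : |R - S| ≤ |r - s| ^ (α-1) :=
        aux_subadd (by linarith : (0:ℝ) ≤ α-1) hβ1 hr.le hs.le
      have h2 : (R - S) ^ 2 ≤ (|r-s| ^ (α-1)) ^ 2 := by
        rw [← sq_abs (R - S)]
        exact pow_le_pow_left₀ (abs_nonneg _) h1 2
      have h3 : (|r-s| ^ (α-1)) ^ 2 = ((r-s)^2) ^ (α-1) := by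
        rw [sq_rpow_comm (abs_nonneg _), sq_abs]
      have hK2 : (1:ℝ) ≤ K^2 := by nlinarith [hK1]
      have h4 : ((r-s)^2) ^ (α-1) ≤ K ^ 2 * ((r-s)^2) ^ (α-1) :=
        le_mul_of_one_le_left (Real.rpow_nonneg (sq_nonneg (r-s)) (α-1)) hK2
      calc (R-S)^2 ≤ ((r-s)^2) ^ (α-1) := by rw [← h3]; exact h2
        _ ≤ _ := h4
    -- combine
    have hcomb : R ^ 2 - 2 * (r ^ (α-2) * s ^ (α-2)) * c + S ^ 2
        = lam * (R+S)^2 + mu * (R-S)^2 := by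
      have h6 : lam * (R+S)^2 + mu * (R-S)^2 = R^2 + S^2 - 2*(R*S*c/(r*s)) := by
        rw [hlam, hmu]; field_simp; ring
      have h5 : R*S*c/(r*s) = r^(α-2)*s^(α-2)*c := by
        rw [hRS]; field_simp
      rw [h6, h5]; ring
    have hKsq : 0 ≤ K ^ 2 := sq_nonneg K
    calc ‖r ^ (α - 2) • a - s ^ (α - 2) • b‖ ^ 2
        = lam * (R+S)^2 + mu * (R-S)^2 := by rw [hL, hcomb]
      _ ≤ lam * (K ^ 2 * ((r+s)^2) ^ (α-1)) + mu * (K ^ 2 * ((r-s)^2) ^ (α-1)) := by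
          exact add_le_add (mul_le_mul_of_nonneg_left hE1 hlam0)
            (mul_le_mul_of_nonneg_left hE2 hmu0)
      _ = K ^ 2 * (lam * ((r+s)^2) ^ (α-1) + mu * ((r-s)^2) ^ (α-1)) := by ring
      _ ≤ K ^ 2 * (r ^ 2 - 2 * c + s ^ 2) ^ (α-1) := mul_le_mul_of_nonneg_left hconc hKsq
      _ = (K * ‖a - b‖ ^ (α-1)) ^ 2 := by
          rw [mul_pow, sq_rpow_comm (norm_nonneg (a-b)), hA]
  -- take square roots
  have := Real.sqrt_le_sqrt hsq
  rwa [Real.sqrt_sq (norm_nonneg _), Real.sqrt_sq hRHSnn] at this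

lemma hasDerivAt_norm_rpow_line {α : ℝ} (hα1 : 1 < α) (x v : F) (t : ℝ) :
    HasDerivAt (fun τ : ℝ => ‖x + τ • v‖ ^ α)
      (α * ‖x + t • v‖ ^ (α - 2) * ⟪x + t • v, v⟫) t := by
  have hα0 : α ≠ 0 := by linarith
  by_cases hz : x + t • v = 0
  · -- degenerate case: the curve passes through the origin at `t`
    rw [hz]
    simp only [inner_zero_left, mul_zero]
    have hx : x = -(t • v) := by
      rw [← sub_eq_zero]; rw [sub_neg_eq_add]; exact hz
    have hfun : ∀ τ : ℝ, ‖x + τ • v‖ ^ α = |τ - t| ^ α * ‖v‖ ^ α := by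
      intro τ
      rw [hx, show -(t • v) + τ • v = (τ - t) • v by rw [sub_smul]; abel,
        norm_smul, Real.norm_eq_abs, Real.mul_rpow (abs_nonneg _) (norm_nonneg _)]
    rw [show (fun τ : ℝ => ‖x + τ • v‖ ^ α) = fun τ => |τ - t| ^ α * ‖v‖ ^ α from
      funext hfun]
    -- show derivative is 0 via slope
    rw [hasDerivAt_iff_tendsto_slope]
    have hslope : ∀ τ : ℝ, τ ≠ t →
        ‖slope (fun τ => |τ - t| ^ α * ‖v‖ ^ α) t τ‖ ≤ |τ - t| ^ (α - 1) * ‖v‖ ^ α := by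
      intro τ hτ
      have hd : (0:ℝ) < |τ - t| := abs_pos.2 (sub_ne_zero.2 hτ)
      rw [slope_def_field]
      rw [show |t - t| = 0 by simp, Real.zero_rpow hα0, zero_mul, sub_zero]
      rw [div_eq_mul_inv, Real.norm_eq_abs, abs_mul, abs_mul, abs_inv]
      rw [abs_of_nonneg (Real.rpow_nonneg (abs_nonneg _) α),
        abs_of_nonneg (Real.rpow_nonneg (norm_nonneg _) α)]
      rw [show |τ - t| ^ α * ‖v‖ ^ α * |τ - t|⁻¹ = (|τ - t| ^ α * |τ - t|⁻¹) * ‖v‖ ^ α by ring]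
      apply mul_le_mul_of_nonneg_right _ (Real.rpow_nonneg (norm_nonneg _) α)
      rw [Real.rpow_sub hd, Real.rpow_one, div_eq_mul_inv]
    have htend : Filter.Tendsto (fun τ : ℝ => |τ - t| ^ (α - 1) * ‖v‖ ^ α)
        (nhds t) (nhds 0) := by
      have h1 : Filter.Tendsto (fun τ : ℝ => |τ - t|) (nhds t) (nhds 0) := by
        have hcont : Continuous fun τ : ℝ => |τ - t| :=
          (continuous_id.sub continuous_const).abs
        have h := hcont.tendsto t
        simpa using h
      have h2 : Filter.Tendsto (fun d : ℝ => d ^ (α - 1)) (nhds 0) (nhds 0) := by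
        have hc : ContinuousAt (fun d : ℝ => d ^ (α - 1)) 0 :=
          Real.continuousAt_rpow_const 0 (α - 1) (Or.inr (by linarith))
        have : (0:ℝ) ^ (α - 1) = 0 := Real.zero_rpow (by linarith)
        simpa [ContinuousAt, this] using hc
      have := (h2.comp h1).mul_const (‖v‖ ^ α)
      simpa using this
    apply squeeze_zero_norm' _ (htend.mono_left nhdsWithin_le_nhds)
    · filter_upwards [self_mem_nhdsWithin] with τ hτ
      exact hslope τ hτ
  · -- regular case
    set z := x + t • v with hzdef
    have hzn : (0:ℝ) < ‖z‖ := norm_pos_iff.2 hz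
    have hq : ∀ τ : ℝ, ‖x + τ • v‖ ^ α
        = (⟪x,x⟫ + 2*τ*⟪x,v⟫ + τ^2*⟪v,v⟫) ^ (α/2) := by
      intro τ
      have h1 : ⟪x,x⟫ + 2*τ*⟪x,v⟫ + τ^2*⟪v,v⟫ = ‖x + τ • v‖ ^ (2:ℕ) := by
        rw [@norm_add_sq_real]
        rw [real_inner_smul_right, norm_smul, Real.norm_eq_abs]
        rw [real_inner_self_eq_norm_sq, real_inner_self_eq_norm_sq]
        rw [mul_pow, sq_abs]
        ring
      rw [h1, ← Real.rpow_natCast (‖x + τ • v‖) 2, ← Real.rpow_mul (norm_nonneg _)]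
      norm_num
      ring_nf
    rw [show (fun τ : ℝ => ‖x + τ • v‖ ^ α)
      = fun τ => (⟪x,x⟫ + 2*τ*⟪x,v⟫ + τ^2*⟪v,v⟫) ^ (α/2) from funext hq]
    have hqt : ⟪x,x⟫ + 2*t*⟪x,v⟫ + t^2*⟪v,v⟫ = ‖z‖ ^ (2:ℕ) := by
      rw [@norm_add_sq_real, real_inner_smul_right, norm_smul, Real.norm_eq_abs,
        real_inner_self_eq_norm_sq, real_inner_self_eq_norm_sq, mul_pow, sq_abs]
      ring
    have hderq : HasDerivAt (fun τ : ℝ => ⟪x,x⟫ + 2*τ*⟪x,v⟫ + τ^2*⟪v,v⟫)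
        (2*⟪x,v⟫ + 2*t*⟪v,v⟫) t := by
      have h1 : HasDerivAt (fun τ : ℝ => 2*τ*⟪x,v⟫) (2*⟪x,v⟫) t := by
        have h := (hasDerivAt_id t).const_mul (2*⟪x,v⟫)
        simp only [mul_one] at h
        rw [show (fun τ : ℝ => 2*τ*⟪x,v⟫) = (fun τ : ℝ => (2*⟪x,v⟫)*τ) from
          funext fun τ => by ring]
        simpa using h
      have h2 : HasDerivAt (fun τ : ℝ => τ^2*⟪v,v⟫) (2*t*⟪v,v⟫) t := by
        have h := (hasDerivAt_pow 2 t).mul_const (⟪v,v⟫ : ℝ)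
        norm_num at h
        simpa using h
      have h0 := ((hasDerivAt_const t (⟪x,x⟫ : ℝ)).add h1).add h2
      exact h0.congr_deriv (by ring)
    have := (hderq.rpow_const (p := α/2) (Or.inl (by rw [hqt]; positivity))) 
    have harg : (2*⟪x,v⟫ + 2*t*⟪v,v⟫) * (α/2) * (⟪x,x⟫ + 2*t*⟪x,v⟫ + t^2*⟪v,v⟫) ^ (α/2 - 1)
        = α * ‖z‖ ^ (α - 2) * ⟪z, v⟫ := by
      rw [hqt]
      have h2 : (‖z‖ ^ (2:ℕ) : ℝ) ^ (α/2 - 1) = ‖z‖ ^ (α - 2) := by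
        rw [← Real.rpow_natCast ‖z‖ 2, ← Real.rpow_mul (norm_nonneg _)]
        norm_num; ring_nf
      have h3 : ⟪z, v⟫ = ⟪x,v⟫ + t*⟪v,v⟫ := by
        rw [hzdef, inner_add_left, real_inner_smul_left]
      rw [h2, h3]
      ring
    rw [harg] at this
    exact this

end Aux

theorem rpow_norm_taylor_bound {n : ℕ} (α : ℝ) (hα : α ∈ Set.Ioc (1:ℝ) 2)
    (u v : EuclideanSpace ℝ (Fin n)) :
    |‖u + v‖ ^ α - ‖u‖ ^ α - α * ‖u‖ ^ (α - 2) * ⟪u, v⟫| ≤ 2 ^ (2 - α) * ‖v‖ ^ α := by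
  obtain ⟨hα1, hα2'⟩ := hα
  rcases eq_or_lt_of_le hα2' with hα2 | hα2
  · -- α = 2 : exact identity
    subst hα2
    rw [show (2:ℝ) - 2 = 0 by norm_num, Real.rpow_zero, Real.rpow_zero, one_mul, mul_one]
    have h2 : ∀ w : EuclideanSpace ℝ (Fin n), ‖w‖ ^ (2:ℝ) = ‖w‖ ^ (2:ℕ) := fun w => by
      rw [← Real.rpow_natCast ‖w‖ 2]; norm_num
    rw [h2, h2, h2, @norm_add_sq_real]
    rw [show ‖u‖^2 + 2 * ⟪u,v⟫ + ‖v‖^2 - ‖u‖^2 - 2 * ⟪u,v⟫ = ‖v‖^2 by ring]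
    rw [abs_of_nonneg (sq_nonneg _)]
  · -- 1 < α < 2
    set g : ℝ → ℝ := fun t => ‖u + t • v‖ ^ α - ‖u‖ ^ α - t * (α * ‖u‖ ^ (α-2) * ⟪u,v⟫)
      with hgdef
    set g' : ℝ → ℝ := fun t =>
      α * ‖u + t • v‖ ^ (α-2) * ⟪u + t • v, v⟫ - α * ‖u‖ ^ (α-2) * ⟪u,v⟫ with hg'def
    have hder : ∀ t : ℝ, HasDerivAt g (g' t) t := by
      intro t
      exact ((hasDerivAt_norm_rpow_line hα1 u v t).sub_const (‖u‖ ^ α)).sub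
        (hasDerivAt_mul_const _)
    set B : ℝ → ℝ := fun t => 2 ^ (2-α) * ‖v‖ ^ α * t ^ α with hBdef
    set B' : ℝ → ℝ := fun t => 2 ^ (2-α) * ‖v‖ ^ α * (α * t ^ (α-1)) with hB'def
    have hBder : ∀ t : ℝ, HasDerivAt B (B' t) t := fun t =>
      (Real.hasDerivAt_rpow_const (Or.inr hα1.le)).const_mul (2 ^ (2-α) * ‖v‖ ^ α)
    have hbound : ∀ t ∈ Set.Ico (0:ℝ) 1, ‖g' t‖ ≤ B' t := by
      intro t ht
      have hge : g' t = α * ⟪‖u + t • v‖ ^ (α-2) • (u + t • v) - ‖u‖ ^ (α-2) • u, v⟫ := by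
        rw [inner_sub_left, real_inner_smul_left, real_inner_smul_left]
        simp only [hg'def]
        ring
      rw [Real.norm_eq_abs, hge, abs_mul, abs_of_nonneg (by linarith : (0:ℝ) ≤ α)]
      have hcs : |⟪‖u + t • v‖ ^ (α-2) • (u + t • v) - ‖u‖ ^ (α-2) • u, v⟫|
          ≤ ‖‖u + t • v‖ ^ (α-2) • (u + t • v) - ‖u‖ ^ (α-2) • u‖ * ‖v‖ :=
        abs_real_inner_le_norm _ _
      have hh := grad_holder hα1 hα2 (u + t • v) u
      rw [show u + t • v - u = t • v by abel] at hh
      have hnorm : ‖t • v‖ ^ (α-1) = t ^ (α-1) * ‖v‖ ^ (α-1) := by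
        rw [norm_smul, Real.norm_eq_abs, abs_of_nonneg ht.1,
          Real.mul_rpow ht.1 (norm_nonneg _)]
      have hva : ‖v‖ ^ (α-1) * ‖v‖ = ‖v‖ ^ α := by
        rcases eq_or_ne ‖v‖ 0 with h0 | h0
        · rw [h0, Real.zero_rpow (by linarith), Real.zero_rpow (by linarith), zero_mul]
        · have h := Real.rpow_add_one h0 (α-1)
          rw [show α - 1 + 1 = α by ring] at h
          exact h.symm
      calc α * |⟪‖u + t • v‖ ^ (α-2) • (u + t • v) - ‖u‖ ^ (α-2) • u, v⟫|
          ≤ α * (‖‖u + t • v‖ ^ (α-2) • (u + t • v) - ‖u‖ ^ (α-2) • u‖ * ‖v‖) := by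
            apply mul_le_mul_of_nonneg_left hcs (by linarith)
        _ ≤ α * ((2 ^ (2-α) * (t ^ (α-1) * ‖v‖ ^ (α-1))) * ‖v‖) := by
            apply mul_le_mul_of_nonneg_left _ (by linarith : (0:ℝ) ≤ α)
            rw [← hnorm]
            exact mul_le_mul_of_nonneg_right hh (norm_nonneg v)
        _ = B' t := by rw [hB'def, ← hva]; ring
    have hcont : ContinuousOn g (Set.Icc 0 1) := fun t _ =>
      (hder t).continuousAt.continuousWithinAt
    have hg0 : ‖g 0‖ ≤ B 0 := by
      simp only [hgdef, hBdef, zero_smul, add_zero, zero_mul, sub_self, sub_zero,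
        Real.zero_rpow (by linarith : α ≠ 0), mul_zero, norm_zero]
      exact le_refl 0
    have key := image_norm_le_of_norm_deriv_right_le_deriv_boundary hcont
      (fun t ht => (hder t).hasDerivWithinAt) hg0 hBder hbound
      (Set.right_mem_Icc.2 zero_le_one)
    have hg1 : g 1 = ‖u + v‖ ^ α - ‖u‖ ^ α - α * ‖u‖ ^ (α-2) * ⟪u,v⟫ := by
      simp [hgdef]
    have hB1 : B 1 = 2 ^ (2-α) * ‖v‖ ^ α := by
      simp [hBdef, Real.one_rpow]
    rw [hg1, hB1, Real.norm_eq_abs] at key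
    exact key
end
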